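/- arXiv:1411.4446 — 6 statements merged into one kernel-verified Lean document; each statement's English description precedes it below -/
import Mathlib

section
/- Let f be a homogeneous polynomial of degree d in variables x_0,...,x_n with real coefficients that is strictly positive on the closed first octant minus the origin (i.e., f(x) > 0 whenever all x_i ≥ 0 and x ≠ 0). Then there exists N_0 ∈ ℕ such that for all N ≥ N_0, every monomial of degree d + N in the expansion of (x_0 + ... + x_n)^N · f has a strictly positive coefficient. -/
/-!
Put `t = d + N`. For `|m| = t`, the coefficient of `x^m` in `(∑ xᵢ)^N * f` is `N! / ∏ mᵢ!` times
`∑_b f_b ∏ᵢ mᵢ (mᵢ - 1) ⋯ (mᵢ - bᵢ + 1)`, and dividing the latter by `t^d` gives `f (m / t)` up to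
an error `(∑_b |f_b|) d² / t`, uniformly in `m`. Since `m / t` lies in the standard simplex, on
which `f` has a positive minimum by compactness, the coefficient is positive once `t` is large.
-/

open MvPolynomial Finset
open scoped Nat

theorem norm_prod_sub_prod_le_sum_norm_sub {ι R : Type*} [NormedCommRing R] [NormOneClass R]
    (s : Finset ι) {u v : ι → R} (hu : ∀ i ∈ s, ‖u i‖ ≤ 1) (hv : ∀ i ∈ s, ‖v i‖ ≤ 1) :
    ‖∏ i ∈ s, u i - ∏ i ∈ s, v i‖ ≤ ∑ i ∈ s, ‖u i - v i‖ := by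
  induction s using Finset.cons_induction with
  | empty => simp
  | cons a s _ ih =>
    simp only [forall_mem_cons] at hu hv
    have hprod : ‖∏ i ∈ s, u i‖ ≤ 1 :=
      (Finset.norm_prod_le _ _).trans (prod_le_one (fun _ _ => norm_nonneg _) hu.2)
    rw [prod_cons, prod_cons, sum_cons]
    calc ‖u a * ∏ i ∈ s, u i - v a * ∏ i ∈ s, v i‖
        = ‖(u a - v a) * ∏ i ∈ s, u i + v a * (∏ i ∈ s, u i - ∏ i ∈ s, v i)‖ := by ring_nf
      _ ≤ ‖u a - v a‖ * ‖∏ i ∈ s, u i‖ + ‖v a‖ * ‖∏ i ∈ s, u i - ∏ i ∈ s, v i‖ :=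
        (norm_add_le _ _).trans (add_le_add (norm_mul_le _ _) (norm_mul_le _ _))
      _ ≤ ‖u a - v a‖ * 1 + 1 * ∑ i ∈ s, ‖u i - v i‖ := by
        gcongr
        · exact hv.1
        · exact ih hu.2 hv.2
      _ = ‖u a - v a‖ + ∑ i ∈ s, ‖u i - v i‖ := by ring

theorem Nat.cast_descFactorial_eq_prod_range {R : Type*} [CommRing R] (a k : ℕ) :
    (a.descFactorial k : R) = ∏ j ∈ range k, ((a : R) - j) := by
  rw [← descPochhammer_eval_eq_descFactorial, descPochhammer_eval_eq_prod_range]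

theorem Finsupp.multinomial_tsub_mul_prod_factorial {σ : Type*} [Fintype σ] {m b : σ →₀ ℕ}
    (hbm : b ≤ m) :
    (m - b).multinomial * ∏ i, (m i)! = (m - b).degree ! * ∏ i, (m i).descFactorial (b i) := by
  have hfac : ∀ i, (m i)! = ((m - b) i)! * (m i).descFactorial (b i) := fun i => by
    rw [tsub_apply, Nat.factorial_mul_descFactorial (hbm i)]
  rw [Finset.prod_congr rfl fun i _ => hfac i, prod_mul_distrib, ← mul_assoc,
    mul_comm _ (∏ i, _ !), multinomial_eq_of_support_subset (subset_univ _), Nat.multinomial_spec,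
    degree_eq_sum]

namespace MvPolynomial

variable {σ R : Type*} [Fintype σ]

def descFactorialEval [CommSemiring R] (f : MvPolynomial σ R) (m : σ →₀ ℕ) : R :=
  ∑ b ∈ f.support, coeff b f * ∏ i, ((m i).descFactorial (b i) : R)

theorem coeff_sum_X_pow_mul_mul_prod_factorial [CommSemiring R] {f : MvPolynomial σ R} {d N : ℕ}
    (hf : f.IsHomogeneous d) {m : σ →₀ ℕ} (hm : m.degree = d + N) :
    coeff m ((∑ i, X i) ^ N * f) * ∏ i, ((m i)! : R) = N ! * descFactorialEval f m := by
  classical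
  conv_lhs => rw [← f.support_sum_monomial_coeff, mul_sum, coeff_sum]
  rw [sum_mul, descFactorialEval, mul_sum]
  refine sum_congr rfl fun b hb => ?_
  rw [coeff_mul_monomial']
  split_ifs with hbm
  · have hdeg : (m - b).degree = N := by
      have hb : b.degree = d := (hf.degree_eq_sum_deg_support hb).symm
      have := congrArg Finsupp.degree (tsub_add_cancel_of_le hbm)
      rw [map_add, hb, hm] at this
      omega
    rw [coeff_sum_X_pow_of_fintype, if_pos (show (m - b).sum (fun _ k => k) = N from hdeg),
      mul_right_comm, ← Nat.cast_prod, ← Nat.cast_mul,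
      Finsupp.multinomial_tsub_mul_prod_factorial hbm, hdeg]
    push_cast
    ring
  · obtain ⟨i, hi⟩ : ∃ i, m i < b i := by simpa [Finsupp.le_def] using hbm
    rw [zero_mul, prod_eq_zero (mem_univ i) (by simp [Nat.descFactorial_eq_zero_iff_lt.2 hi]),
      mul_zero, mul_zero]

theorem abs_prod_descFactorial_div_sub_prod_pow_le {m b : σ →₀ ℕ} {t : ℝ} (ht : 0 < t)
    (hm : ∀ i, (m i : ℝ) ≤ t) (hb : (b.degree : ℝ) ≤ t) :
    |(∏ i, ((m i).descFactorial (b i) : ℝ)) / t ^ b.degree - ∏ i, ((m i : ℝ) / t) ^ b i|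
      ≤ b.degree ^ 2 / t := by
  set S := univ.sigma fun i => range (b i)
  have hS : #S = b.degree := by simp [S, Finsupp.degree_eq_sum]
  have hj : ∀ p ∈ S, (p.2 : ℝ) ≤ b.degree := fun p hp => by
    have hp : p.2 < b p.1 := by simpa [S] using hp
    rw [Finsupp.degree_eq_sum]
    exact_mod_cast hp.le.trans (single_le_sum (fun i _ => Nat.zero_le (b i)) (mem_univ p.1))
  have hdesc : (∏ i, ((m i).descFactorial (b i) : ℝ)) / t ^ b.degree
      = ∏ p ∈ S, ((m p.1 : ℝ) - p.2) / t := by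
    rw [prod_div_distrib, prod_const, hS, prod_sigma]
    simp_rw [Nat.cast_descFactorial_eq_prod_range]
  have hpow : ∏ i, ((m i : ℝ) / t) ^ b i = ∏ p ∈ S, (m p.1 : ℝ) / t := by
    simp only [S, prod_sigma, prod_const, card_range]
  have hunit : ∀ x : ℝ, -t ≤ x → x ≤ t → ‖x / t‖ ≤ 1 := fun x h₁ h₂ => by
    rw [Real.norm_eq_abs, abs_div, abs_of_pos ht, div_le_one ht, abs_le]
    exact ⟨h₁, h₂⟩
  rw [hdesc, hpow, ← Real.norm_eq_abs]
  calc _ ≤ ∑ p ∈ S, ‖((m p.1 : ℝ) - p.2) / t - m p.1 / t‖ :=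
        norm_prod_sub_prod_le_sum_norm_sub S
          (fun p hp => hunit _ (by linarith [hm p.1, hj p hp, (m p.1).cast_nonneg (α := ℝ)])
            (by linarith [hm p.1, (p.2).cast_nonneg (α := ℝ)]))
          (fun p _ => hunit _ (by linarith [hm p.1, (m p.1).cast_nonneg (α := ℝ)]) (hm p.1))
    _ ≤ ∑ p ∈ S, (b.degree : ℝ) / t := sum_le_sum fun p hp => by
        rw [← sub_div, sub_sub_cancel_left, norm_div, norm_neg, Real.norm_of_nonneg ht.le,
          Real.norm_natCast]
        exact div_le_div_of_nonneg_right (hj p hp) ht.le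
    _ = _ := by rw [sum_const, hS, nsmul_eq_mul]; ring

theorem abs_descFactorialEval_div_sub_eval_le {f : MvPolynomial σ ℝ} {d : ℕ}
    (hf : f.IsHomogeneous d) {m : σ →₀ ℕ} {t : ℝ} (ht : 0 < t) (hm : ∀ i, (m i : ℝ) ≤ t)
    (hd : (d : ℝ) ≤ t) :
    |descFactorialEval f m / t ^ d - eval (fun i => (m i : ℝ) / t) f|
      ≤ (∑ b ∈ f.support, |coeff b f|) * d ^ 2 / t := by
  rw [descFactorialEval, eval_eq', sum_div, ← sum_sub_distrib, sum_mul, sum_div]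
  refine (abs_sum_le_sum_abs _ _).trans (sum_le_sum fun b hb => ?_)
  obtain rfl : b.degree = d := (hf.degree_eq_sum_deg_support hb).symm
  rw [mul_div_assoc, ← mul_sub, abs_mul, mul_div_assoc]
  exact mul_le_mul_of_nonneg_left (abs_prod_descFactorial_div_sub_prod_pow_le ht hm hd)
    (abs_nonneg _)

theorem descFactorialEval_pos {f : MvPolynomial σ ℝ} {d : ℕ} (hf : f.IsHomogeneous d) {ε : ℝ}
    (hε : 0 < ε) (hεf : ∀ y ∈ stdSimplex ℝ σ, ε ≤ eval y f) {m : σ →₀ ℕ} (hd : d ≤ m.degree)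
    (hm : (∑ b ∈ f.support, |coeff b f|) * d ^ 2 / ε < m.degree) :
    0 < descFactorialEval f m := by
  set t : ℝ := (m.degree : ℝ) with ht_def
  have ht : 0 < t := lt_of_le_of_lt (by positivity) hm
  have hmt : ∀ i, (m i : ℝ) ≤ t := fun i => by
    rw [ht_def, Finsupp.degree_eq_sum]
    exact_mod_cast single_le_sum (fun i _ => Nat.zero_le (m i)) (mem_univ i)
  have hy : (fun i => (m i : ℝ) / t) ∈ stdSimplex ℝ σ := by
    refine ⟨fun i => by positivity, ?_⟩
    rw [← sum_div, div_eq_one_iff_eq ht.ne', ht_def, Finsupp.degree_eq_sum, Nat.cast_sum]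
  have herr : (∑ b ∈ f.support, |coeff b f|) * d ^ 2 / t < ε := by
    rw [div_lt_iff₀ hε] at hm
    rw [div_lt_iff₀ ht]
    linarith
  have happrox :=
    abs_descFactorialEval_div_sub_eval_le hf ht hmt (by rw [ht_def]; exact_mod_cast hd)
  have : 0 < descFactorialEval f m / t ^ d := by linarith [abs_le.1 happrox, hεf _ hy]
  exact (div_pos_iff_of_pos_right (by positivity)).1 this

end MvPolynomial

/-- **Pólya's theorem.** If a homogeneous polynomial `f` of degree `d` is strictly
positive on the closed first octant minus the origin, then for all sufficiently
large `N`, every monomial of degree `d + N` in `(x_0 + ⋯ + x_n)^N * f` has a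
strictly positive coefficient. -/
theorem polya (n d : ℕ) (f : MvPolynomial (Fin (n + 1)) ℝ)
    (hf : f.IsHomogeneous d)
    (hpos : ∀ x : Fin (n + 1) → ℝ, (∀ i, 0 ≤ x i) → x ≠ 0 → 0 < eval x f) :
    ∃ N₀ : ℕ, ∀ N ≥ N₀, ∀ m : Fin (n + 1) →₀ ℕ, (∑ i, m i) = d + N →
      0 < coeff m ((∑ i, (X i : MvPolynomial (Fin (n + 1)) ℝ)) ^ N * f) := by
  obtain ⟨ε, hε, hεf⟩ := (isCompact_stdSimplex ℝ (Fin (n + 1))).exists_forall_le'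
    (continuous_eval f).continuousOn fun y hy => hpos y hy.1 fun h => by simpa [h] using hy.2
  refine ⟨⌊(∑ b ∈ f.support, |coeff b f|) * d ^ 2 / ε⌋₊ + 1, fun N hN m hm => ?_⟩
  have hdeg : m.degree = d + N := by rw [Finsupp.degree_eq_sum, hm]
  have hval := descFactorialEval_pos hf hε hεf (m := m) (by omega)
    (by rw [hdeg]; exact Nat.lt_of_floor_lt (by omega))
  have hcoeff := coeff_sum_X_pow_mul_mul_prod_factorial (R := ℝ) hf hdeg
  have hfac : 0 < ∏ i, ((m i)! : ℝ) := prod_pos fun i _ => by positivity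
  exact pos_of_mul_pos_left (hcoeff ▸ mul_pos (by positivity) hval) hfac.le
end

section
/- Let f ∈ ℝ[x_0,...,x_n] be a homogeneous polynomial of even degree 2d which is strictly positive on ℝ^{n+1} \ {0}. Then there exist sums of squares of polynomials M_1, R_1, M_2, R_2, each strictly positive away from the origin, such that M_1 and M_2 are sums of squares of monomials and (M_2 + R_2) · f = M_1 + R_1. -/
/-!
Habicht's symmetrisation reduces the theorem to Pólya's theorem. If `g` is invariant under every
sign change `x_i ↦ -x_i`, then `g = G(x_0², …, x_n²)`, and Pólya's theorem gives `N` such that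
`(∑ y_i)^N G` has nonnegative coefficients; substituting `y_i = x_i²`, both `(∑ x_i²)^N` and
`(∑ x_i²)^N g` are positive definite sums of squares of monomials, and each splits into two
halves `M + R`. If `g` is not yet invariant under the sign change `g ↦ g'` of one more variable,
then `g g'` and `g + g'` are, and multipliers `C₁, C₂` for them give the multiplier
`C₁ C₂ (g + g')` for `g`, since `C₁ C₂ (g + g') g = g² C₁ C₂ + C₂ (C₁ g g')`.

Pólya's theorem: for `|β| = D = N + e` one has
`β! · [x^β] (∑ y_i)^N G = N! ∑_α c_α ∏_i (β_i)_{α_i}` with falling factorials `(β_i)_{α_i}`, and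
`∏_i (β_i)_{α_i} / D^e` differs from `(β / D)^α` by at most `e² / D`, so for large `N` the sum
is close to `D^e G(β / D) ≥ D^e min_Δ G > 0`, where `Δ` is the standard simplex.
-/

open MvPolynomial

def IsSOS {σ : Type*} (p : MvPolynomial σ ℝ) : Prop :=
  ∃ (k : ℕ) (q : Fin k → MvPolynomial σ ℝ), p = ∑ i, (q i) ^ 2

def IsMonomialSOS {σ : Type*} (p : MvPolynomial σ ℝ) : Prop :=
  ∃ (k : ℕ) (a : Fin k → ℝ) (m : Fin k → (σ →₀ ℕ)),
    p = ∑ i, (monomial (m i) (a i)) ^ 2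

theorem Finset.prod_sub_prod_le_sum_sub {ι : Type*} (s : Finset ι) {p q : ι → ℝ}
    (hq : ∀ i ∈ s, 0 ≤ q i) (hqp : ∀ i ∈ s, q i ≤ p i) (hp : ∀ i ∈ s, p i ≤ 1) :
    ∏ i ∈ s, p i - ∏ i ∈ s, q i ≤ ∑ i ∈ s, (p i - q i) := by
  induction s using Finset.cons_induction with
  | empty => simp
  | cons a s ha ih =>
    simp only [Finset.forall_mem_cons] at hq hqp hp
    rw [Finset.prod_cons, Finset.prod_cons, Finset.sum_cons]
    have hqs : 0 ≤ ∏ i ∈ s, q i := Finset.prod_nonneg hq.2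
    have hqs1 : ∏ i ∈ s, q i ≤ 1 :=
      Finset.prod_le_one hq.2 fun i hi => (hqp.2 i hi).trans (hp.2 i hi)
    have hqps : ∏ i ∈ s, q i ≤ ∏ i ∈ s, p i := Finset.prod_le_prod hq.2 hqp.2
    nlinarith [ih hq.2 hqp.2 hp.2]

theorem div_pow_sub_descFactorial_div_pow_le {δ D : ℕ} (hδ : δ ≤ D) (a : ℕ) :
    ((δ : ℝ) / D) ^ a - (δ.descFactorial a : ℝ) / (D : ℝ) ^ a ≤ a * (a / D) := by
  have hprod : (δ.descFactorial a : ℝ) / (D : ℝ) ^ a =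
      ∏ j ∈ Finset.range a, ((δ - j : ℕ) : ℝ) / D := by
    rw [Nat.descFactorial_eq_prod_range, Nat.cast_prod, Finset.prod_div_distrib,
      Finset.prod_const, Finset.card_range]
  rw [hprod, Finset.pow_eq_prod_const]
  have hD : (0 : ℝ) ≤ D := D.cast_nonneg
  calc _ ≤ ∑ j ∈ Finset.range a, ((δ : ℝ) / D - ((δ - j : ℕ) : ℝ) / D) :=
        Finset.prod_sub_prod_le_sum_sub _ (fun _ _ => by positivity)
          (fun j _ => div_le_div_of_nonneg_right (by exact_mod_cast δ.sub_le j) hD)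
          (fun _ _ => div_le_one_of_le₀ (by exact_mod_cast hδ) hD)
    _ ≤ ∑ _j ∈ Finset.range a, (a / D : ℝ) := by
        refine Finset.sum_le_sum fun j hj => ?_
        rw [← sub_div]
        refine div_le_div_of_nonneg_right ?_ hD
        have hja := Finset.mem_range.mp hj
        have hδj : (δ : ℝ) ≤ ((δ - j : ℕ) : ℝ) + a := by exact_mod_cast (by omega : δ ≤ δ - j + a)
        linarith
    _ = a * (a / D) := by simp

theorem abs_prod_div_pow_sub_prod_descFactorial_le {ι : Type*} (s : Finset ι) {δ : ι → ℕ}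
    {D : ℕ} (hδ : ∀ i ∈ s, δ i ≤ D) (a : ι → ℕ) :
    |∏ i ∈ s, ((δ i : ℝ) / D) ^ a i - (∏ i ∈ s, ((δ i).descFactorial (a i) : ℝ)) /
      (D : ℝ) ^ (∑ i ∈ s, a i)| ≤ (∑ i ∈ s, a i : ℕ) ^ 2 / D := by
  have hD : (0 : ℝ) ≤ D := D.cast_nonneg
  have hq : ∀ i ∈ s, ((δ i).descFactorial (a i) : ℝ) / (D : ℝ) ^ a i ≤ ((δ i : ℝ) / D) ^ a i :=
    fun i _ => by
      rw [div_pow]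
      exact div_le_div_of_nonneg_right (by exact_mod_cast (δ i).descFactorial_le_pow (a i))
        (by positivity)
  rw [← Finset.prod_pow_eq_pow_sum, ← Finset.prod_div_distrib,
    abs_of_nonneg (sub_nonneg.mpr (Finset.prod_le_prod (fun _ _ => by positivity) hq))]
  calc _ ≤ ∑ i ∈ s, (((δ i : ℝ) / D) ^ a i - ((δ i).descFactorial (a i) : ℝ) / (D : ℝ) ^ a i) :=
        Finset.prod_sub_prod_le_sum_sub _ (fun _ _ => by positivity) hq
          fun i hi => pow_le_one₀ (by positivity)
            (div_le_one_of_le₀ (by exact_mod_cast hδ i hi) hD)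
    _ ≤ ∑ i ∈ s, (a i : ℝ) * ((∑ i ∈ s, a i : ℕ) / D) := by
        refine Finset.sum_le_sum fun i hi =>
          (div_pow_sub_descFactorial_div_pow_le (hδ i hi) _).trans ?_
        gcongr
        exact_mod_cast Finset.single_le_sum (fun _ _ => Nat.zero_le _) hi
    _ = (∑ i ∈ s, a i : ℕ) ^ 2 / D := by
        rw [← Finset.sum_mul]
        push_cast
        ring

namespace MvPolynomial

variable {σ : Type*}

theorem _root_.IsSOS.sq (q : MvPolynomial σ ℝ) : IsSOS (q ^ 2) :=
  ⟨1, fun _ => q, by simp⟩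

theorem _root_.IsSOS.add {p q : MvPolynomial σ ℝ} (hp : IsSOS p) (hq : IsSOS q) :
    IsSOS (p + q) := by
  obtain ⟨k, u, rfl⟩ := hp
  obtain ⟨l, v, rfl⟩ := hq
  exact ⟨k + l, Fin.addCases u v, by simp [Fin.sum_univ_add]⟩

theorem _root_.IsSOS.mul {p q : MvPolynomial σ ℝ} (hp : IsSOS p) (hq : IsSOS q) :
    IsSOS (p * q) := by
  obtain ⟨k, u, rfl⟩ := hp
  obtain ⟨l, v, rfl⟩ := hq
  refine ⟨k * l, fun j => u (finProdFinEquiv.symm j).1 * v (finProdFinEquiv.symm j).2, ?_⟩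
  rw [Finset.sum_mul_sum, ← Fintype.sum_prod_type', ← finProdFinEquiv.symm.sum_comp]
  simp [mul_pow]

theorem _root_.IsSOS.eval_nonneg {p : MvPolynomial σ ℝ} (hp : IsSOS p) (x : σ → ℝ) :
    0 ≤ eval x p := by
  obtain ⟨k, u, rfl⟩ := hp
  simp only [map_sum, map_pow]
  positivity

theorem _root_.IsMonomialSOS.isSOS {p : MvPolynomial σ ℝ} (hp : IsMonomialSOS p) : IsSOS p := by
  obtain ⟨k, a, m, rfl⟩ := hp
  exact ⟨k, fun i => monomial (m i) (a i), rfl⟩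

theorem _root_.IsMonomialSOS.mul {p q : MvPolynomial σ ℝ} (hp : IsMonomialSOS p)
    (hq : IsMonomialSOS q) : IsMonomialSOS (p * q) := by
  obtain ⟨k, a, m, rfl⟩ := hp
  obtain ⟨l, b, w, rfl⟩ := hq
  refine ⟨k * l, fun j => a (finProdFinEquiv.symm j).1 * b (finProdFinEquiv.symm j).2,
    fun j => m (finProdFinEquiv.symm j).1 + w (finProdFinEquiv.symm j).2, ?_⟩
  rw [Finset.sum_mul_sum, ← Fintype.sum_prod_type', ← finProdFinEquiv.symm.sum_comp]
  simp [← mul_pow, monomial_mul]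

theorem isMonomialSOS_expand_two {p : MvPolynomial σ ℝ} (hp : ∀ β, 0 ≤ coeff β p) :
    IsMonomialSOS (expand 2 p) := by
  classical
  refine ⟨p.support.card, fun j => √(coeff (p.support.equivFin.symm j) p),
    fun j => p.support.equivFin.symm j, ?_⟩
  conv_lhs => rw [p.as_sum, map_sum]
  rw [← Finset.sum_coe_sort, ← p.support.equivFin.symm.sum_comp]
  refine Fintype.sum_congr _ _ fun j => ?_
  rw [expand_monomial, sq, monomial_mul, Real.mul_self_sqrt (hp _), two_nsmul]

def IsPosDef (p : MvPolynomial σ ℝ) : Prop :=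
  ∀ x : σ → ℝ, x ≠ 0 → 0 < eval x p

theorem IsPosDef.add {p q : MvPolynomial σ ℝ} (hp : IsPosDef p) (hq : IsPosDef q) :
    IsPosDef (p + q) := fun x hx => by
  rw [map_add]
  exact add_pos (hp x hx) (hq x hx)

theorem IsPosDef.mul {p q : MvPolynomial σ ℝ} (hp : IsPosDef p) (hq : IsPosDef q) :
    IsPosDef (p * q) := fun x hx => by
  rw [map_mul]
  exact mul_pos (hp x hx) (hq x hx)

theorem IsPosDef.add_nonneg {p q : MvPolynomial σ ℝ} (hp : IsPosDef p)
    (hq : ∀ x, 0 ≤ eval x q) : IsPosDef (p + q) := fun x hx => by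
  rw [map_add]
  exact add_pos_of_pos_of_nonneg (hp x hx) (hq x)

theorem IsPosDef.pow {p : MvPolynomial σ ℝ} (hp : IsPosDef p) (N : ℕ) : IsPosDef (p ^ N) :=
  fun x hx => by
    rw [map_pow]
    exact pow_pos (hp x hx) N

theorem isPosDef_expand_two_sum_X [Fintype σ] : IsPosDef (expand 2 (∑ i, X i : MvPolynomial σ ℝ)) :=
  fun x hx => by
    obtain ⟨i, hi⟩ := Function.ne_iff.mp hx
    simp only [map_sum, expand_X, eval_pow, eval_X]
    exact Finset.sum_pos' (fun j _ => sq_nonneg _) ⟨i, Finset.mem_univ i, sq_pos_of_ne_zero hi⟩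

def IsHabichtSum (p : MvPolynomial σ ℝ) : Prop :=
  ∃ M R, IsMonomialSOS M ∧ IsSOS R ∧ IsPosDef M ∧ IsPosDef R ∧ p = M + R

theorem IsHabichtSum.isSOS {p : MvPolynomial σ ℝ} (hp : IsHabichtSum p) : IsSOS p := by
  obtain ⟨M, R, hM, hR, -, -, rfl⟩ := hp
  exact hM.isSOS.add hR

theorem IsHabichtSum.mul {p q : MvPolynomial σ ℝ} (hp : IsHabichtSum p) (hq : IsHabichtSum q) :
    IsHabichtSum (p * q) := by
  obtain ⟨M₁, R₁, hM₁, hR₁, hM₁p, hR₁p, rfl⟩ := hp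
  obtain ⟨M₂, R₂, hM₂, hR₂, hM₂p, hR₂p, rfl⟩ := hq
  refine ⟨M₁ * M₂, M₁ * R₂ + R₁ * (M₂ + R₂), hM₁.mul hM₂,
    (hM₁.isSOS.mul hR₂).add (hR₁.mul (hM₂.isSOS.add hR₂)), hM₁p.mul hM₂p,
    (hM₁p.mul hR₂p).add (hR₁p.mul (hM₂p.add hR₂p)), by ring⟩

theorem IsHabichtSum.sq_mul_add (q : MvPolynomial σ ℝ) {p r : MvPolynomial σ ℝ}
    (hp : IsHabichtSum p) (hr : IsHabichtSum r) : IsHabichtSum (q ^ 2 * p + r) := by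
  obtain ⟨M, R, hM, hR, hMp, hRp, rfl⟩ := hr
  refine ⟨M, R + q ^ 2 * p, hM, hR.add ((IsSOS.sq q).mul hp.isSOS), hMp,
    hRp.add_nonneg ((IsSOS.sq q).mul hp.isSOS).eval_nonneg, by ring⟩

theorem isHabichtSum_expand_two {p : MvPolynomial σ ℝ} (hp : ∀ β, 0 ≤ coeff β p)
    (hpos : IsPosDef (expand 2 p)) : IsHabichtSum (expand 2 p) := by
  have half_pos : IsPosDef (expand 2 (C (1 / 2) * p)) := fun x hx => by
    simpa [map_mul] using hpos x hx
  have half : IsMonomialSOS (expand 2 (C (1 / 2) * p)) :=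
    isMonomialSOS_expand_two fun β => by simpa [coeff_C_mul] using hp β
  refine ⟨_, _, half, half.isSOS, half_pos, half_pos, ?_⟩
  rw [← map_add, ← add_mul, ← C_add]
  norm_num

section SignFlip

variable [DecidableEq σ] {R : Type*} [CommRing R]

noncomputable def signFlip (i : σ) : MvPolynomial σ R →ₐ[R] MvPolynomial σ R :=
  bind₁ (Function.update X i (-X i))

theorem signFlip_X (i j : σ) :
    signFlip i (X j : MvPolynomial σ R) = if j = i then -X j else X j := by
  rcases eq_or_ne j i with rfl | hj <;> simp [signFlip, *]

theorem eval_signFlip (i : σ) (x : σ → R) (p : MvPolynomial σ R) :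
    eval x (signFlip i p) = eval (Function.update x i (-x i)) p := by
  have hpt : (fun j => eval x (Function.update X i (-X i) j)) = Function.update x i (-x i) := by
    ext j
    rcases eq_or_ne j i with rfl | hj <;> simp [*]
  rw [signFlip, eval, eval₂Hom_bind₁]
  exact congrArg (eval · p) hpt

theorem signFlip_signFlip (i : σ) (p : MvPolynomial σ R) : signFlip i (signFlip i p) = p := by
  rw [← AlgHom.comp_apply, ← AlgHom.id_apply (R := R) p]
  refine DFunLike.congr_fun (algHom_ext fun j => ?_) p
  rcases eq_or_ne j i with rfl | hj <;> simp [signFlip_X, *]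

theorem signFlip_comm (i j : σ) (p : MvPolynomial σ R) :
    signFlip i (signFlip j p) = signFlip j (signFlip i p) := by
  simp only [← AlgHom.comp_apply]
  refine DFunLike.congr_fun (algHom_ext fun k => ?_) p
  rcases eq_or_ne k i with rfl | hi <;> rcases eq_or_ne k j with rfl | hj <;> simp [signFlip_X, *]

theorem signFlip_monomial (i : σ) (β : σ →₀ ℕ) (a : R) :
    signFlip i (monomial β a) = monomial β ((-1) ^ β i * a) := by
  have hX : ∀ j e, Function.update X i (-X i) j ^ e =
      (Function.update (1 : σ → MvPolynomial σ R) i (-1) j) ^ e * X j ^ e := fun j e => by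
    rcases eq_or_ne j i with rfl | hj
    · simp [← mul_pow]
    · simp [hj]
  have hsign : ∏ j ∈ β.support, (Function.update (1 : σ → MvPolynomial σ R) i (-1) j) ^ β j =
      (-1) ^ β i := by
    rw [← Finsupp.prod, Finsupp.prod_eq_single i (fun j _ hj => by simp [hj]) (fun _ => by simp)]
    simp
  rw [signFlip, bind₁_monomial, Finset.prod_congr rfl fun j _ => hX j (β j),
    Finset.prod_mul_distrib, hsign, monomial_eq, Finsupp.prod, C_mul, map_pow, map_neg, map_one]
  ring

theorem coeff_signFlip (i : σ) (p : MvPolynomial σ R) (β : σ →₀ ℕ) :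
    coeff β (signFlip i p) = (-1) ^ β i * coeff β p := by
  conv_lhs => rw [p.as_sum]
  simp only [map_sum, signFlip_monomial, coeff_sum, coeff_monomial]
  rw [Finset.sum_ite_eq']
  split_ifs with h
  · rfl
  · rw [notMem_support_iff.mp h, mul_zero]

theorem even_of_signFlip_eq {i : σ} {p : MvPolynomial σ ℝ} (h : signFlip i p = p)
    {β : σ →₀ ℕ} (hβ : coeff β p ≠ 0) : Even (β i) := by
  by_contra hodd
  have := coeff_signFlip i p β
  rw [h, (Nat.not_even_iff_odd.mp hodd).neg_one_pow] at this
  exact hβ (by linarith)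

theorem IsHomogeneous.signFlip {p : MvPolynomial σ R} {m : ℕ} (hp : p.IsHomogeneous m) (i : σ) :
    (signFlip i p).IsHomogeneous m := fun β hβ =>
  hp (right_ne_zero_of_mul (coeff_signFlip i p β ▸ hβ))

theorem IsPosDef.signFlip {p : MvPolynomial σ ℝ} (hp : IsPosDef p) (i : σ) :
    IsPosDef (signFlip i p) := fun x hx => by
  rw [eval_signFlip]
  refine hp _ fun h => hx ?_
  ext j
  have := congrFun h j
  rcases eq_or_ne j i with rfl | hj <;> simp_all

theorem exists_expand_two_eq_of_forall_signFlip_eq {p : MvPolynomial σ ℝ}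
    (h : ∀ i, signFlip i p = p) : ∃ q, expand 2 q = p := by
  refine ⟨∑ β ∈ p.support, monomial (β.mapRange (· / 2) (Nat.zero_div 2)) (coeff β p), ?_⟩
  conv_rhs => rw [p.as_sum]
  refine (map_sum _ _ _).trans (Finset.sum_congr rfl fun β hβ => ?_)
  rw [expand_monomial]
  refine congrArg (monomial · _) (Finsupp.ext fun i => ?_)
  simp [Nat.mul_div_cancel' (even_of_signFlip_eq (h i) (mem_support_iff.mp hβ)).two_dvd]

end SignFlip

theorem IsHomogeneous.degree_eq {R : Type*} [CommSemiring R]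
    {p : MvPolynomial σ R} {e : ℕ} (hp : p.IsHomogeneous e) {α : σ →₀ ℕ} (hα : coeff α p ≠ 0) :
    α.degree = e := by
  rw [Finsupp.degree_eq_weight_one, ← Pi.one_def]
  exact hp hα

theorem IsHomogeneous.of_expand {R : Type*} [CommSemiring R] {p : ℕ}
    (hp : p ≠ 0) {q : MvPolynomial σ R} {m : ℕ} (h : (expand p q).IsHomogeneous m) :
    q.IsHomogeneous (m / p) := fun α hα => by
  have hdeg := @h (p • α) (by rwa [coeff_expand_smul _ hp])
  rw [map_nsmul, smul_eq_mul] at hdeg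
  rw [← hdeg, Nat.mul_div_cancel_left _ (Nat.pos_of_ne_zero hp)]

section Polya

open Nat

variable [Fintype σ]

theorem prod_factorial_mul_multinomial_sub {α β : σ →₀ ℕ} (h : α ≤ β) :
    (∏ i, (β i)!) * (β - α).multinomial = (β - α).degree ! * ∏ i, (β i).descFactorial (α i) := by
  have hfac : ∀ i, (β i)! = ((β - α) i)! * (β i).descFactorial (α i) := fun i => by
    rw [Finsupp.tsub_apply, Nat.factorial_mul_descFactorial (h i)]
  rw [Finset.prod_congr rfl fun i _ => hfac i, Finset.prod_mul_distrib,
    Finsupp.multinomial_eq_of_support_subset (Finset.subset_univ _), Finsupp.degree_eq_sum,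
    ← Nat.multinomial_spec]
  ring

theorem prod_factorial_mul_coeff_sum_X_pow_mul {G : MvPolynomial σ ℝ} {e N : ℕ}
    (hG : G.IsHomogeneous e) {β : σ →₀ ℕ} (hβ : β.degree = N + e) :
    (∏ i, ((β i)! : ℝ)) * coeff β ((∑ i, X i) ^ N * G) =
      N ! * ∑ α ∈ G.support, coeff α G * ∏ i, ((β i).descFactorial (α i) : ℝ) := by
  conv_lhs => rw [G.as_sum]
  rw [Finset.mul_sum, coeff_sum, Finset.mul_sum, Finset.mul_sum]
  refine Finset.sum_congr rfl fun α hα => ?_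
  rw [coeff_mul_monomial']
  split_ifs with hαβ
  · have hdeg : (β - α).degree = N := by
      have hsplit := congrArg Finsupp.degree (tsub_add_cancel_of_le hαβ)
      rw [map_add, hG.degree_eq (mem_support_iff.mp hα), hβ] at hsplit
      omega
    rw [coeff_sum_X_pow_of_fintype, if_pos (show ((β - α).sum fun _ m => m) = N from hdeg)]
    have := congrArg (Nat.cast (R := ℝ)) (prod_factorial_mul_multinomial_sub hαβ)
    push_cast [hdeg] at this
    linear_combination coeff α G * this
  · obtain ⟨i, hi⟩ : ∃ i, β i < α i := by
      simpa [Finsupp.le_def] using hαβ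
    rw [Finset.prod_eq_zero (f := fun i => ((β i).descFactorial (α i) : ℝ)) (Finset.mem_univ i)
      (Nat.cast_eq_zero.mpr (Nat.descFactorial_eq_zero_iff_lt.mpr hi))]
    simp

theorem abs_eval_sub_sum_descFactorial_le {G : MvPolynomial σ ℝ} {e : ℕ}
    (hG : G.IsHomogeneous e) (β : σ →₀ ℕ) :
    |eval (fun i => (β i : ℝ) / β.degree) G -
        (∑ α ∈ G.support, coeff α G * ∏ i, ((β i).descFactorial (α i) : ℝ)) / (β.degree : ℝ) ^ e|
      ≤ (∑ α ∈ G.support, |coeff α G|) * (e ^ 2 / β.degree) := by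
  rw [eval_eq', Finset.sum_div, ← Finset.sum_sub_distrib, Finset.sum_mul]
  refine (Finset.abs_sum_le_sum_abs _ _).trans (Finset.sum_le_sum fun α hα => ?_)
  have hαe : ∑ i, α i = e := by
    rw [← Finsupp.degree_eq_sum]
    exact hG.degree_eq (mem_support_iff.mp hα)
  rw [mul_div_assoc, ← mul_sub, abs_mul]
  gcongr
  have := abs_prod_div_pow_sub_prod_descFactorial_le Finset.univ
    (fun i _ => Finsupp.le_degree i β) α
  rwa [hαe] at this

theorem exists_coeff_sum_X_pow_mul_nonneg {G : MvPolynomial σ ℝ} {e : ℕ}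
    (hG : G.IsHomogeneous e) (hpos : ∀ y ∈ stdSimplex ℝ σ, 0 < eval y G) :
    ∃ N : ℕ, ∀ β, 0 ≤ coeff β ((∑ i, X i) ^ N * G) := by
  obtain ⟨μ, hμ, hμG⟩ :=
    (isCompact_stdSimplex ℝ σ).exists_forall_le' (continuous_eval G).continuousOn hpos
  set A := ∑ α ∈ G.support, |coeff α G|
  obtain ⟨N, hN⟩ := exists_nat_gt (A * e ^ 2 / μ)
  refine ⟨N, fun β => ?_⟩
  by_cases hβ : β.degree = N + e
  swap
  · have hsum : (∑ i, X i : MvPolynomial σ ℝ).IsHomogeneous 1 :=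
      IsHomogeneous.sum _ _ _ fun i _ => isHomogeneous_X ℝ i
    rw [((hsum.pow N).mul hG).coeff_eq_zero (by rwa [one_mul])]
  have hA : 0 ≤ A := Finset.sum_nonneg fun _ _ => abs_nonneg _
  have hND : (N : ℝ) ≤ β.degree := by rw [hβ]; exact_mod_cast N.le_add_right e
  have hD : (0 : ℝ) < β.degree := lt_of_lt_of_le (lt_of_le_of_lt (by positivity) hN) hND
  have hy : (fun i => (β i : ℝ) / β.degree) ∈ stdSimplex ℝ σ := by
    refine ⟨fun i => by positivity, ?_⟩
    rw [← Finset.sum_div, div_eq_one_iff_eq hD.ne', Finsupp.degree_eq_sum, Nat.cast_sum]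
  have hS : 0 < ∑ α ∈ G.support, coeff α G * ∏ i, ((β i).descFactorial (α i) : ℝ) := by
    have happrox := (abs_le.mp (abs_eval_sub_sum_descFactorial_le hG β)).2
    have herr : A * (e ^ 2 / β.degree) < μ := by
      rw [← mul_div_assoc, div_lt_iff₀ hD]
      rw [div_lt_iff₀ hμ] at hN
      nlinarith
    have hμy := hμG _ hy
    have hSdiv : 0 < (∑ α ∈ G.support, coeff α G * ∏ i, ((β i).descFactorial (α i) : ℝ)) /
        (β.degree : ℝ) ^ e := by linarith
    exact (div_pos_iff_of_pos_right (by positivity)).mp hSdiv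
  have hfac : (0 : ℝ) < ∏ i, ((β i)! : ℝ) := by positivity
  refine nonneg_of_mul_nonneg_right ?_ hfac
  rw [prod_factorial_mul_coeff_sum_X_pow_mul hG hβ]
  positivity

end Polya

def HasHabichtMultiplier (g : MvPolynomial σ ℝ) : Prop :=
  ∃ C, IsHabichtSum C ∧ IsHabichtSum (C * g)

theorem HasHabichtMultiplier.of_mul_of_add {g g' : MvPolynomial σ ℝ}
    (h₁ : HasHabichtMultiplier (g * g')) (h₂ : HasHabichtMultiplier (g + g')) :
    HasHabichtMultiplier g := by
  obtain ⟨C₁, hC₁, hD₁⟩ := h₁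
  obtain ⟨C₂, hC₂, hD₂⟩ := h₂
  refine ⟨C₁ * (C₂ * (g + g')), hC₁.mul hD₂, ?_⟩
  rw [show C₁ * (C₂ * (g + g')) * g = g ^ 2 * (C₁ * C₂) + C₂ * (C₁ * (g * g')) by ring]
  exact (hC₁.mul hC₂).sq_mul_add g (hC₂.mul hD₁)

variable [Fintype σ] [DecidableEq σ]

theorem hasHabichtMultiplier_of_forall_signFlip_eq {g : MvPolynomial σ ℝ} {m : ℕ}
    (hg : g.IsHomogeneous m) (hpos : IsPosDef g) (h : ∀ i, signFlip i g = g) :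
    HasHabichtMultiplier g := by
  obtain ⟨G, rfl⟩ := exists_expand_two_eq_of_forall_signFlip_eq h
  have hGpos : ∀ y ∈ stdSimplex ℝ σ, 0 < eval y G := fun y hy => by
    have hsq : (fun i => √(y i)) ^ 2 = y := by
      ext i
      simp [Real.sq_sqrt (hy.1 i)]
    have hne : (fun i => √(y i)) ≠ 0 := fun h0 => by
      have hsum := hy.2
      rw [← hsq, h0] at hsum
      simp at hsum
    simpa [hsq] using hpos _ hne
  obtain ⟨N, hN⟩ := exists_coeff_sum_X_pow_mul_nonneg (hg.of_expand two_ne_zero) hGpos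
  have hsumN : ∀ β, 0 ≤ coeff β ((∑ i, X i : MvPolynomial σ ℝ) ^ N) := fun β => by
    rw [coeff_sum_X_pow_of_fintype]
    split_ifs <;> positivity
  have hQ : IsPosDef (expand 2 ((∑ i, X i : MvPolynomial σ ℝ) ^ N)) := by
    rw [map_pow]
    exact isPosDef_expand_two_sum_X.pow N
  refine ⟨_, isHabichtSum_expand_two hsumN hQ, ?_⟩
  rw [← map_mul]
  exact isHabichtSum_expand_two hN (by rw [map_mul]; exact hQ.mul hpos)

theorem hasHabichtMultiplier_of_signFlip_eq (s : Finset σ) {g : MvPolynomial σ ℝ} {m : ℕ}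
    (hg : g.IsHomogeneous m) (hpos : IsPosDef g) (h : ∀ i ∉ s, signFlip i g = g) :
    HasHabichtMultiplier g := by
  induction s using Finset.induction_on generalizing g m with
  | empty => exact hasHabichtMultiplier_of_forall_signFlip_eq hg hpos fun i => h i (by simp)
  | insert a s _ ih =>
    have hflip : ∀ i ∉ s, i ≠ a → signFlip i (signFlip a g) = signFlip a g := fun i hi hia => by
      rw [signFlip_comm, h i (by simp [hi, hia])]
    refine HasHabichtMultiplier.of_mul_of_add (g' := signFlip a g)
      (ih (hg.mul (hg.signFlip a)) (hpos.mul (hpos.signFlip a)) fun i hi => ?_)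
      (ih (hg.add (hg.signFlip a)) (hpos.add (hpos.signFlip a)) fun i hi => ?_)
    all_goals
      rcases eq_or_ne i a with rfl | hia
      · simp only [map_mul, map_add, signFlip_signFlip, mul_comm, add_comm]
      · simp only [map_mul, map_add, h i (by simp [hi, hia]), hflip i hi hia]

end MvPolynomial

/-- **Habicht's theorem** (strengthened form): for `f` homogeneous of even degree `2d`
and strictly positive off the origin, there are sums of squares `M₁, R₁, M₂, R₂`, each
positive away from the origin, with `M₁, M₂` sums of squares of monomials, such that
`(M₂ + R₂) * f = M₁ + R₁`. -/
theorem habicht (n d : ℕ) (f : MvPolynomial (Fin (n + 1)) ℝ)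
    (hf : f.IsHomogeneous (2 * d))
    (hpos : ∀ x : Fin (n + 1) → ℝ, x ≠ 0 → 0 < eval x f) :
    ∃ M₁ R₁ M₂ R₂ : MvPolynomial (Fin (n + 1)) ℝ,
      IsMonomialSOS M₁ ∧ IsMonomialSOS M₂ ∧ IsSOS R₁ ∧ IsSOS R₂ ∧
      (∀ x : Fin (n + 1) → ℝ, x ≠ 0 → 0 < eval x M₁) ∧
      (∀ x : Fin (n + 1) → ℝ, x ≠ 0 → 0 < eval x R₁) ∧
      (∀ x : Fin (n + 1) → ℝ, x ≠ 0 → 0 < eval x M₂) ∧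
      (∀ x : Fin (n + 1) → ℝ, x ≠ 0 → 0 < eval x R₂) ∧
      (M₂ + R₂) * f = M₁ + R₁ := by
  obtain ⟨C, ⟨M₂, R₂, hM₂, hR₂, hM₂p, hR₂p, rfl⟩, M₁, R₁, hM₁, hR₁, hM₁p, hR₁p, h⟩ :=
    MvPolynomial.hasHabichtMultiplier_of_signFlip_eq Finset.univ hf hpos fun i hi =>
      absurd (Finset.mem_univ i) hi
  exact ⟨M₁, R₁, M₂, R₂, hM₁, hM₂, hR₁, hR₂, hM₁p, hR₁p, hM₂p, hR₂p, h⟩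
end

section
/- Let λ_0 = 1 - x_1 - ... - x_n, λ_1 = x_1, ..., λ_n = x_n, and let f ∈ ℝ[x_1,...,x_n] be strictly positive on the standard n-simplex {x ∈ ℝ^n : x_i ≥ 0 for all i, x_1 + ... + x_n ≤ 1}. Then there exist finitely many nonnegative reals a_α (indexed by multi-indices α ∈ ℕ^{n+1}, with all a_α > 0 when nonzero) such that f = Σ_α a_α λ_0^{α_0} λ_1^{α_1} ⋯ λ_n^{α_n}. -/
open MvPolynomial Finset

/-!
Pólya's argument. Pad each homogeneous component of degree `k` of `f` with `(∑ X i) ^ (d - k)`,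
`d = f.totalDegree`, to get a form `F` in `n + 1` variables; substituting `λ₀, …, λₙ`, which sum to
`1`, gives back `f`, so `F > 0` on the standard simplex of `ℝⁿ⁺¹`.

For `|t| = N + d = M`, the coefficient of `X ^ t` in `(∑ X i) ^ N * F` is a positive multiple of
`∑_β F_β ∏ᵢ (tᵢ)_(βᵢ)` (falling factorials), which is `M ^ d * P (1 / M) (t / M)` for
`P h y = ∑_β F_β ∏ᵢ yᵢ (yᵢ - h) ⋯ (yᵢ - (βᵢ - 1) h)`. As `P` is continuous, `P 0 = F` and the
simplex is compact, `P h > 0` on the simplex for small `h`, so all these coefficients are positive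
once `N` is large. Expanding `(∑ X i) ^ N * F` into monomials and substituting `λ` gives the
representation.
-/

namespace Nat

theorem multinomial_tsub_mul_descFactorial {α : Type*} (s : Finset α) (f g : α → ℕ)
    (hgf : ∀ i ∈ s, g i ≤ f i) :
    multinomial s (f - g) * (∑ i ∈ s, f i).descFactorial (∑ i ∈ s, g i) =
      multinomial s f * ∏ i ∈ s, (f i).descFactorial (g i) := by
  have hsum : ∑ i ∈ s, (f - g) i = ∑ i ∈ s, f i - ∑ i ∈ s, g i := sum_tsub_distrib _ hgf
  refine Nat.eq_of_mul_eq_mul_left (n := ∏ i ∈ s, ((f - g) i)!)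
    (prod_pos fun i _ => factorial_pos _) ?_
  calc (∏ i ∈ s, ((f - g) i)!) * (multinomial s (f - g) *
          (∑ i ∈ s, f i).descFactorial (∑ i ∈ s, g i))
      = (∑ i ∈ s, f i - ∑ i ∈ s, g i)! * (∑ i ∈ s, f i).descFactorial (∑ i ∈ s, g i) := by
        rw [← mul_assoc, multinomial_spec, hsum]
    _ = (∏ i ∈ s, (f i)!) * multinomial s f := by
        rw [factorial_mul_descFactorial (sum_le_sum hgf), multinomial_spec]
    _ = (∏ i ∈ s, ((f - g) i)!) * (multinomial s f * ∏ i ∈ s, (f i).descFactorial (g i)) := by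
        rw [← prod_congr rfl fun i hi => factorial_mul_descFactorial (hgf i hi), prod_mul_distrib]
        simp only [Pi.sub_apply]
        ring

theorem cast_descFactorial_eq_prod_range_s3 {R : Type*} [CommRing R] (t b : ℕ) :
    (t.descFactorial b : R) = ∏ j ∈ range b, ((t : R) - j) := by
  rw [← descPochhammer_eval_eq_descFactorial, descPochhammer_eval_eq_prod_range]

end Nat

namespace MvPolynomial

section Coefficients

variable {σ R : Type*} [CommSemiring R]

theorem IsHomogeneous.degree_eq_s3 {φ : MvPolynomial σ R} {n : ℕ} (hφ : φ.IsHomogeneous n)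
    {t : σ →₀ ℕ} (ht : t ∈ φ.support) : t.degree = n := by
  rw [Finsupp.degree_eq_weight_one]
  exact hφ (mem_support_iff.mp ht)

variable [Fintype σ]

theorem isHomogeneous_sum_X_pow (N : ℕ) :
    ((∑ i, X i : MvPolynomial σ R) ^ N).IsHomogeneous N := by
  simpa using (IsHomogeneous.sum _ _ 1 fun i _ => isHomogeneous_X R i).pow N

theorem coeff_sum_X_pow_mul_monomial_mul_descFactorial (N : ℕ) (β t : σ →₀ ℕ)
    (ht : t.degree = N + β.degree) :
    coeff t ((∑ i, X i) ^ N * monomial β (1 : R)) * (t.degree.descFactorial β.degree : R) =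
      ((t.multinomial * ∏ i, (t i).descFactorial (β i) : ℕ) : R) := by
  classical
  rw [coeff_mul_monomial', mul_one]
  split_ifs with hβt
  · have hdeg : (t - β).sum (fun _ m => m) = N := by
      change (t - β).degree = N
      simp only [Finsupp.degree_eq_sum, Finsupp.tsub_apply]
      rw [sum_tsub_distrib _ fun i _ => hβt i,
        ← Finsupp.degree_eq_sum, ← Finsupp.degree_eq_sum, ht, Nat.add_sub_cancel]
    rw [coeff_sum_X_pow_of_fintype, if_pos hdeg, ← Nat.cast_mul,
      Finsupp.multinomial_eq_of_support_subset (subset_univ _),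
      Finsupp.multinomial_eq_of_support_subset (subset_univ _),
      Finsupp.degree_eq_sum, Finsupp.degree_eq_sum, Finsupp.coe_tsub]
    exact congrArg _ (Nat.multinomial_tsub_mul_descFactorial _ _ _ fun i _ => hβt i)
  · obtain ⟨i, hi⟩ : ∃ i, t i < β i := by simpa [Finsupp.le_def] using hβt
    rw [zero_mul, prod_eq_zero (mem_univ i) (Nat.descFactorial_eq_zero_iff_lt.2 hi), mul_zero,
      Nat.cast_zero]

theorem IsHomogeneous.coeff_sum_X_pow_mul_mul_descFactorial {F : MvPolynomial σ R} {d : ℕ}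
    (hF : F.IsHomogeneous d) (N : ℕ) (t : σ →₀ ℕ) (ht : t.degree = N + d) :
    coeff t ((∑ i, X i) ^ N * F) * ((N + d).descFactorial d : R) =
      t.multinomial * ∑ β ∈ F.support, coeff β F * ∏ i, ((t i).descFactorial (β i) : R) := by
  conv_lhs => rw [F.as_sum]
  rw [mul_sum, coeff_sum, sum_mul, mul_sum]
  refine sum_congr rfl fun β hβ => ?_
  have hβd := hF.degree_eq_s3 hβ
  rw [show monomial β (coeff β F) = C (coeff β F) * monomial β 1 by rw [C_mul_monomial, mul_one],
    mul_left_comm, coeff_C_mul, mul_assoc, ← ht, ← hβd,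
    coeff_sum_X_pow_mul_monomial_mul_descFactorial N β t (hβd ▸ ht)]
  push_cast
  ring

end Coefficients

section Falling

variable {σ : Type*} [Fintype σ]

noncomputable def fallingEval (F : MvPolynomial σ ℝ) (h : ℝ) (y : σ → ℝ) : ℝ :=
  ∑ β ∈ F.support, coeff β F * ∏ i, ∏ j ∈ range (β i), (y i - j * h)

theorem fallingEval_zero (F : MvPolynomial σ ℝ) (y : σ → ℝ) : fallingEval F 0 y = eval y F := by
  simp [fallingEval, eval_eq']

theorem continuous_fallingEval (F : MvPolynomial σ ℝ) :
    Continuous fun p : ℝ × (σ → ℝ) => fallingEval F p.1 p.2 := by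
  unfold fallingEval
  fun_prop

theorem IsHomogeneous.sum_coeff_mul_descFactorial {F : MvPolynomial σ ℝ} {d : ℕ}
    (hF : F.IsHomogeneous d) (t : σ →₀ ℕ) {M : ℕ} (hM : M ≠ 0) :
    ∑ β ∈ F.support, coeff β F * ∏ i, ((t i).descFactorial (β i) : ℝ) =
      M ^ d * fallingEval F (M : ℝ)⁻¹ (fun i => t i / M) := by
  have hM' : (M : ℝ) ≠ 0 := Nat.cast_ne_zero.mpr hM
  rw [fallingEval, mul_sum]
  refine sum_congr rfl fun β hβ => ?_
  have hscale : ∀ i, ((t i).descFactorial (β i) : ℝ) =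
      M ^ β i * ∏ j ∈ range (β i), ((t i : ℝ) / M - j * (M : ℝ)⁻¹) := fun i => by
    rw [Nat.cast_descFactorial_eq_prod_range_s3,
      show (M : ℝ) ^ β i = (M : ℝ) ^ #(range (β i)) by rw [card_range], pow_card_mul_prod]
    refine prod_congr rfl fun j _ => ?_
    field_simp
  rw [prod_congr rfl fun i _ => hscale i, prod_mul_distrib, prod_pow_eq_pow_sum,
    ← Finsupp.degree_eq_sum, hF.degree_eq_s3 hβ]
  ring

end Falling

open Filter Topology in
theorem IsHomogeneous.eventually_coeff_sum_X_pow_mul_pos {σ : Type*} [Fintype σ]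
    {F : MvPolynomial σ ℝ} {d : ℕ} (hF : F.IsHomogeneous d)
    (hpos : ∀ y ∈ stdSimplex ℝ σ, 0 < eval y F) :
    ∀ᶠ N in atTop, ∀ t : σ →₀ ℕ, t.degree = N + d → 0 < coeff t ((∑ i, X i) ^ N * F) := by
  have hnear : ∀ᶠ h in 𝓝 (0 : ℝ), ∀ y ∈ stdSimplex ℝ σ, 0 < fallingEval F h y :=
    (isCompact_stdSimplex ℝ σ).eventually_forall_of_forall_eventually fun y hy =>
      (continuous_fallingEval F).continuousAt.eventually
        (lt_mem_nhds (by simpa only [fallingEval_zero] using hpos y hy))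
  have hinv : Tendsto (fun N : ℕ => ((N + d : ℕ) : ℝ)⁻¹) atTop (𝓝 0) :=
    tendsto_inv_atTop_zero.comp (tendsto_natCast_atTop_atTop.comp (tendsto_add_atTop_nat d))
  filter_upwards [hinv.eventually hnear, eventually_gt_atTop 0] with N hN hN0 t ht
  have hM : N + d ≠ 0 := by omega
  have hy : (fun i => (t i : ℝ) / (N + d : ℕ)) ∈ stdSimplex ℝ σ := by
    refine ⟨fun i => by positivity, ?_⟩
    rw [← sum_div, ← Nat.cast_sum, ← Finsupp.degree_eq_sum, ht, div_self (by exact_mod_cast hM)]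
  have key := hF.coeff_sum_X_pow_mul_mul_descFactorial N t ht
  rw [hF.sum_coeff_mul_descFactorial t hM] at key
  have hprod : 0 < coeff t ((∑ i, X i) ^ N * F) * ((N + d).descFactorial d : ℝ) := by
    rw [key]
    exact mul_pos (by exact_mod_cast Nat.multinomial_pos _ _) (mul_pos (by positivity) (hN _ hy))
  exact pos_of_mul_pos_left hprod (Nat.cast_nonneg _)

section Homogenization

variable {R : Type*} [CommSemiring R] {n : ℕ}

/-- Unlike homogenization by a new variable, padding with powers of `∑ X i` keeps the value of `f`
on the hyperplane `∑ X i = 1`; `X i.succ` plays the role of the variable `X i` of `f`. -/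
noncomputable def simplexHomogenization (f : MvPolynomial (Fin n) R) :
    MvPolynomial (Fin (n + 1)) R :=
  ∑ k ∈ range (f.totalDegree + 1),
    rename Fin.succ (homogeneousComponent k f) * (∑ i, X i) ^ (f.totalDegree - k)

theorem isHomogeneous_simplexHomogenization (f : MvPolynomial (Fin n) R) :
    (simplexHomogenization f).IsHomogeneous f.totalDegree :=
  IsHomogeneous.sum _ _ _ fun k hk => by
    have := ((homogeneousComponent_isHomogeneous k f).rename_isHomogeneous (f := Fin.succ)).mul
      (isHomogeneous_sum_X_pow (f.totalDegree - k))
    rwa [Nat.add_sub_cancel' (mem_range_succ_iff.mp hk)] at this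

theorem aeval_simplexHomogenization {S : Type*} [CommSemiring S] [Algebra R S]
    (f : MvPolynomial (Fin n) R) {g : Fin (n + 1) → S} (hg : ∑ i, g i = 1) :
    aeval g (simplexHomogenization f) = aeval (g ∘ Fin.succ) f := by
  conv_rhs => rw [← sum_homogeneousComponent f]
  simp only [simplexHomogenization, map_sum, map_mul, map_pow, aeval_rename, aeval_X, hg,
    one_pow, mul_one]

end Homogenization

end MvPolynomial

/-- Polynomials strictly positive on the standard `n`-simplex are nonnegative
combinations of products of the linear polynomials
`λ₀ = 1 - x_1 - ⋯ - x_n, λ₁ = x_1, …, λ_n = x_n` describing its faces. -/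
theorem positive_on_simplex (n : ℕ) (f : MvPolynomial (Fin n) ℝ)
    (hf : ∀ x : Fin n → ℝ, (∀ i, 0 ≤ x i) → (∑ i, x i) ≤ 1 → 0 < eval x f) :
    ∃ (A : Finset (Fin (n + 1) →₀ ℕ)) (a : (Fin (n + 1) →₀ ℕ) → ℝ),
      (∀ α ∈ A, 0 < a α) ∧
      f = ∑ α ∈ A, C (a α) *
        ((1 - ∑ i, X i) ^ (α 0) * ∏ i : Fin n, (X i : MvPolynomial (Fin n) ℝ) ^ (α i.succ)) := by
  set g : Fin (n + 1) → MvPolynomial (Fin n) ℝ := Fin.cons (1 - ∑ i, X i) X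
  have hg : ∑ i, g i = 1 := by simp [g, Fin.sum_univ_succ]
  have hFpos : ∀ y ∈ stdSimplex ℝ (Fin (n + 1)), 0 < eval y (simplexHomogenization f) := by
    rintro y ⟨hy0, hy1⟩
    rw [show eval y (simplexHomogenization f) = eval (y ∘ Fin.succ) f from
      aeval_simplexHomogenization f hy1]
    refine hf _ (fun i => hy0 _) ?_
    rw [Fin.sum_univ_succ] at hy1
    simp only [Function.comp_apply]
    linarith [hy0 0]
  obtain ⟨N, hN⟩ :=
    ((isHomogeneous_simplexHomogenization f).eventually_coeff_sum_X_pow_mul_pos hFpos).exists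
  set G := (∑ i, X i) ^ N * simplexHomogenization f
  have hG := (isHomogeneous_sum_X_pow N).mul (isHomogeneous_simplexHomogenization f)
  refine ⟨G.support, fun t => coeff t G, fun t ht => hN t (hG.degree_eq_s3 ht), ?_⟩
  calc f = aeval g G := by
        rw [map_mul, aeval_simplexHomogenization f hg, map_pow, map_sum]
        simp [g, hg]
    _ = _ := by
        nth_rewrite 1 [G.as_sum]
        rw [map_sum]
        refine sum_congr rfl fun t _ => ?_
        rw [aeval_monomial, algebraMap_eq, Finsupp.prod_fintype _ _ fun _ => pow_zero _,
          Fin.prod_univ_succ]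
        rfl
end

section
/- Let S = {g_1,...,g_s} ⊂ ℝ[x_1,...,x_n] be a finite set of polynomials such that K_S = {x ∈ ℝ^n : g_i(x) ≥ 0 for all i} is compact, and let g_{s+1} ∈ ℝ[x_1,...,x_n]. Suppose that every polynomial strictly positive on K_S lies in the quadratic module M_S. Then every polynomial strictly positive on K_{S ∪ {g_{s+1}}} lies in the quadratic module M_{S ∪ {g_{s+1}}}. Moreover, in the representation it suffices to use a single square as the coefficient of g_{s+1}: if f > 0 on K_{S∪{g_{s+1}}} then there exists r ∈ ℝ[x_1,...,x_n] with f - r^2 g_{s+1} > 0 on K_S. -/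
/-!
By compactness of `K_S`, positivity of `f` on `K_S ∩ {g ≥ 0}` persists as `f ≥ δ > 0` on
`K_S ∩ {g ≥ -ε}`. With `B ≥ |g|` on `K_S`, the weight `r = c (B - g)^k` satisfies
`r² = A ((B - g)/(B + ε))^{2k}`: on `{g < -ε}` the base is `≥ 1`, so `r² g ≤ -A ε` beats the
lower bound of `f`, while on `{g > 0}` the base is `≤ B/(B + ε) < 1` and `r² g` falls below `δ` for
large `k`. Hence `f - r² g > 0` on `K_S`, and the Putinar property of `S` puts it in `M_S`.
-/

open MvPolynomial

/-- Membership in the quadratic module generated by `g 0, …, g (s-1)`. -/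
def InQM {σ : Type*} {s : ℕ} (g : Fin s → MvPolynomial σ ℝ) (f : MvPolynomial σ ℝ) : Prop :=
  ∃ (σ₀ : MvPolynomial σ ℝ) (τ : Fin s → MvPolynomial σ ℝ),
    IsSOS σ₀ ∧ (∀ i, IsSOS (τ i)) ∧ f = σ₀ + ∑ i, τ i * g i

theorem exists_sq_mul_lt_of_bounds {B ε δ M : ℝ} (hB : 0 ≤ B) (hε : 0 < ε) (hδ : 0 < δ) :
    ∃ (c : ℝ) (k : ℕ), ∀ t y : ℝ, |t| ≤ B → -M ≤ y → (-ε ≤ t → δ ≤ y) →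
      (c * (B - t) ^ k) ^ 2 * t < y := by
  set A := (|M| + 1) / ε
  set ρ := B / (B + ε)
  have hA : 0 ≤ A := by positivity
  have hBε : 0 < B + ε := by linarith
  have hρ : ρ ^ 2 < 1 := by
    rw [sq_lt_one_iff₀ (by positivity), div_lt_one hBε]
    linarith
  obtain ⟨k, hk⟩ := exists_pow_lt_of_lt_one (show 0 < δ / (A * B + 1) by positivity) hρ
  refine ⟨√A / (B + ε) ^ k, k, fun t y ht hyM hyδ => ?_⟩
  obtain ⟨htB, htB'⟩ := abs_le.mp ht
  set u := (B - t) / (B + ε)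
  have hweight : (√A / (B + ε) ^ k * (B - t) ^ k) ^ 2 = A * (u ^ 2) ^ k := by
    simp only [u, mul_pow, div_pow, ← pow_mul, Real.sq_sqrt hA]
    ring
  rw [hweight]
  rcases lt_or_ge t (-ε) with hneg | hmid
  · have hu : 1 ≤ u := by rw [le_div_iff₀ hBε]; linarith
    have hpow : 1 ≤ (u ^ 2) ^ k := one_le_pow₀ (one_le_pow₀ hu)
    calc A * (u ^ 2) ^ k * t ≤ A * t := by nlinarith [mul_nonneg hA (sub_nonneg.2 hpow)]
      _ ≤ A * -ε := by nlinarith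
      _ = -(|M| + 1) := by rw [mul_neg, div_mul_cancel₀ _ hε.ne']
      _ < y := by linarith [le_abs_self M]
  · refine lt_of_lt_of_le ?_ (hyδ hmid)
    rcases le_or_gt t 0 with hnonpos | hpos
    · exact lt_of_le_of_lt (mul_nonpos_of_nonneg_of_nonpos (by positivity) hnonpos) hδ
    have hu : u ^ 2 ≤ ρ ^ 2 :=
      pow_le_pow_left₀ (div_nonneg (by linarith) hBε.le)
        (div_le_div_of_nonneg_right (by linarith) hBε.le) 2
    have hpow : (u ^ 2) ^ k ≤ (ρ ^ 2) ^ k := pow_le_pow_left₀ (by positivity) hu k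
    have hP : 0 ≤ (u ^ 2) ^ k := by positivity
    calc A * (u ^ 2) ^ k * t ≤ A * B * (u ^ 2) ^ k := by nlinarith [mul_nonneg hA hP]
      _ ≤ (A * B + 1) * (ρ ^ 2) ^ k := by nlinarith [mul_nonneg hA hB]
      _ < (A * B + 1) * (δ / (A * B + 1)) := by gcongr
      _ = δ := by field_simp

section Compact

variable {X : Type*} [TopologicalSpace X] {K : Set X} {F G : X → ℝ}

theorem IsCompact.exists_margin_of_pos_on_nonneg (hK : IsCompact K) (hF : Continuous F)
    (hG : Continuous G) (hpos : ∀ x ∈ K, 0 ≤ G x → 0 < F x) :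
    ∃ ε > 0, ∃ δ > 0, ∀ x ∈ K, -ε ≤ G x → δ ≤ F x := by
  obtain ⟨η, hη, hGη⟩ := (hK.inter_right (isClosed_le hF continuous_const)).exists_forall_le'
    (f := fun x => -G x) hG.neg.continuousOn (a := 0) fun x hx =>
      neg_pos.2 (lt_of_not_ge fun hGx => (hpos x hx.1 hGx).not_ge hx.2)
  obtain ⟨δ, hδ, hFδ⟩ := (hK.inter_right (isClosed_le continuous_const hG)).exists_forall_le'
    hF.continuousOn (a := 0) fun x ⟨hxK, (hGx : -(η / 2) ≤ G x)⟩ =>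
      lt_of_not_ge fun hFx => by linarith [hGη x ⟨hxK, hFx⟩]
  exact ⟨η / 2, half_pos hη, δ, hδ, fun x hx hGx => hFδ x ⟨hx, hGx⟩⟩

theorem IsCompact.exists_sq_pow_mul_lt (hK : IsCompact K) (hF : Continuous F)
    (hG : Continuous G) (hpos : ∀ x ∈ K, 0 ≤ G x → 0 < F x) :
    ∃ (c B : ℝ) (k : ℕ), ∀ x ∈ K, (c * (B - G x) ^ k) ^ 2 * G x < F x := by
  obtain ⟨ε, hε, δ, hδ, hFδ⟩ := hK.exists_margin_of_pos_on_nonneg hF hG hpos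
  obtain ⟨B, hB⟩ := hK.exists_bound_of_continuousOn hG.continuousOn
  obtain ⟨M, hM⟩ := hK.exists_bound_of_continuousOn hF.continuousOn
  obtain ⟨c, k, hck⟩ := exists_sq_mul_lt_of_bounds (abs_nonneg B) hε hδ (M := M)
  exact ⟨c, |B|, k, fun x hx => hck _ _ ((hB x hx).trans (le_abs_self B))
    (neg_le_of_abs_le (hM x hx)) (hFδ x hx)⟩

end Compact

theorem IsCompact.exists_sub_sq_mul_pos {σ : Type*} {K : Set (σ → ℝ)} (hK : IsCompact K)
    {f h : MvPolynomial σ ℝ} (hpos : ∀ x ∈ K, 0 ≤ eval x h → 0 < eval x f) :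
    ∃ r : MvPolynomial σ ℝ, ∀ x ∈ K, 0 < eval x (f - r ^ 2 * h) := by
  obtain ⟨c, B, k, hlt⟩ := hK.exists_sq_pow_mul_lt (continuous_eval f) (continuous_eval h) hpos
  refine ⟨C c * (C B - h) ^ k, fun x hx => ?_⟩
  simpa [sub_pos] using hlt x hx

theorem isSOS_sq {σ : Type*} (r : MvPolynomial σ ℝ) : IsSOS (r ^ 2) :=
  ⟨1, fun _ => r, by simp⟩

theorem InQM.of_sub_sq_mul_last {σ : Type*} {s : ℕ} {g : Fin (s + 1) → MvPolynomial σ ℝ}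
    {f r : MvPolynomial σ ℝ}
    (h : InQM (fun i : Fin s => g i.castSucc) (f - r ^ 2 * g (Fin.last s))) : InQM g f := by
  obtain ⟨σ₀, τ, hσ₀, hτ, heq⟩ := h
  refine ⟨σ₀, Fin.snoc τ (r ^ 2), hσ₀,
    Fin.lastCases (by simpa using isSOS_sq r) fun i => by simpa using hτ i, ?_⟩
  rw [Fin.sum_univ_castSucc]
  simp only [Fin.snoc_castSucc, Fin.snoc_last]
  linear_combination heq

/-- **Inductive property.** If `K_S` is compact and `S = {g 0, …, g (s-1)}` is Putinar,
then `S ∪ {g s}` is Putinar; moreover a single square suffices as coefficient of the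
new generator. -/
theorem inductive_property (n s : ℕ) (g : Fin (s + 1) → MvPolynomial (Fin n) ℝ)
    (hcomp : IsCompact {x : Fin n → ℝ | ∀ i : Fin s, 0 ≤ eval x (g i.castSucc)})
    (hput : ∀ f : MvPolynomial (Fin n) ℝ,
      (∀ x : Fin n → ℝ, (∀ i : Fin s, 0 ≤ eval x (g i.castSucc)) → 0 < eval x f) →
      InQM (fun i : Fin s => g i.castSucc) f) :
    (∀ f : MvPolynomial (Fin n) ℝ,
      (∀ x : Fin n → ℝ, (∀ i : Fin (s + 1), 0 ≤ eval x (g i)) → 0 < eval x f) →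
      InQM g f) ∧
    (∀ f : MvPolynomial (Fin n) ℝ,
      (∀ x : Fin n → ℝ, (∀ i : Fin (s + 1), 0 ≤ eval x (g i)) → 0 < eval x f) →
      ∃ r : MvPolynomial (Fin n) ℝ, ∀ x : Fin n → ℝ,
        (∀ i : Fin s, 0 ≤ eval x (g i.castSucc)) →
        0 < eval x (f - r ^ 2 * g (Fin.last s))) := by
  have single_square (f : MvPolynomial (Fin n) ℝ)
      (hf : ∀ x : Fin n → ℝ, (∀ i, 0 ≤ eval x (g i)) → 0 < eval x f) :=
    hcomp.exists_sub_sq_mul_pos (h := g (Fin.last s)) fun x hS hlast =>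
      hf x (Fin.lastCases hlast hS)
  refine ⟨fun f hf => ?_, single_square⟩
  obtain ⟨r, hr⟩ := single_square f hf
  exact (hput _ hr).of_sub_sq_mul_last
end

section
/- Let N > 0 and S = {N - x_1^2 - ... - x_n^2}. Then every polynomial f ∈ ℝ[x_1,...,x_n] which is strictly positive on the closed ball {x : x_1^2 + ... + x_n^2 ≤ N} can be written as f = σ_0 + σ_1 · (N - x_1^2 - ... - x_n^2) with σ_0, σ_1 sums of squares of polynomials. -/
open MvPolynomial

/-!
The quadratic module `T` generated by `g = N - ∑ xᵢ²` is closed under products (`g²` is a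
square) and Archimedean: `N - xᵢ² ∈ T`, and the elements bounded by real constants modulo `T`
form a subalgebra. Let `F = f - ε`, with `2ε > 0` a lower bound of `f` on the (compact) ball.
If `F t = 1 + s` for some `s, t ∈ T`, a geometric contraction `F + c ∈ T ⟹ F + θ c ∈ T`
(`θ < 1`) gives `f = F + ε ∈ T`. Otherwise `T - F T` is a preordering. A maximal preordering
`Q` above it is total and Archimedean, so `a ↦ sup {r : ℝ | a - r ∈ Q}` is an `ℝ`-algebra
character, that is, evaluation at a point of the ball where `F ≤ 0`: a contradiction.
-/

variable {A : Type*} [CommRing A]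

namespace RingPreordering

def adjoin (T : Subsemiring A) (hT : ∀ x : A, x * x ∈ T) (a : A)
    (h : ∀ x ∈ T, ∀ y ∈ T, x + a * y ≠ -1) : RingPreordering A :=
  mk' {z | ∃ x ∈ T, ∃ y ∈ T, z = x + a * y}
    (by
      rintro _ _ ⟨x, hx, y, hy, rfl⟩ ⟨x', hx', y', hy', rfl⟩
      exact ⟨x + x', add_mem hx hx', y + y', add_mem hy hy', by ring⟩)
    (by
      rintro _ _ ⟨x, hx, y, hy, rfl⟩ ⟨x', hx', y', hy', rfl⟩
      exact ⟨x * x' + a * a * (y * y'), add_mem (mul_mem hx hx') (mul_mem (hT a) (mul_mem hy hy')),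
        x * y' + x' * y, add_mem (mul_mem hx hy') (mul_mem hx' hy), by ring⟩)
    (fun x => ⟨x * x, hT x, 0, zero_mem T, by ring⟩)
    (by
      rintro ⟨x, hx, y, hy, hxy⟩
      exact h x hx y hy hxy.symm)

variable {T : Subsemiring A} {hT : ∀ x : A, x * x ∈ T} {a : A}
  {h : ∀ x ∈ T, ∀ y ∈ T, x + a * y ≠ -1}

theorem mem_adjoin_of_mem {x : A} (hx : x ∈ T) : x ∈ adjoin T hT a h :=
  ⟨x, hx, 0, zero_mem T, by ring⟩

theorem self_mem_adjoin : a ∈ adjoin T hT a h :=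
  ⟨0, zero_mem T, 1, one_mem T, by ring⟩

theorem exists_le_isMax (P : RingPreordering A) : ∃ Q, P ≤ Q ∧ IsMax Q := by
  refine zorn_le_nonempty_Ici₀ P (fun c _ hc Q₀ hQ₀ => ?_) P le_rfl
  have directed {x y : A} (hx : x ∈ ⋃ Q ∈ c, (Q : Set A)) (hy : y ∈ ⋃ Q ∈ c, (Q : Set A)) :
      ∃ Q ∈ c, x ∈ Q ∧ y ∈ Q := by
    simp only [Set.mem_iUnion, SetLike.mem_coe, exists_prop] at hx hy
    obtain ⟨Q₁, hQ₁, hx⟩ := hx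
    obtain ⟨Q₂, hQ₂, hy⟩ := hy
    rcases hc.total hQ₁ hQ₂ with h | h
    · exact ⟨Q₂, hQ₂, h hx, hy⟩
    · exact ⟨Q₁, hQ₁, hx, h hy⟩
  refine ⟨mk' (⋃ Q ∈ c, (Q : Set A)) (fun hx hy => ?_) (fun hx hy => ?_)
    (fun x => Set.mem_biUnion hQ₀ (Q₀.mul_self_mem x)) ?_, fun Q hQ x hx => ?_⟩
  · obtain ⟨Q, hQ, hx, hy⟩ := directed hx hy
    exact Set.mem_biUnion hQ (add_mem hx hy)
  · obtain ⟨Q, hQ, hx, hy⟩ := directed hx hy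
    exact Set.mem_biUnion hQ (mul_mem hx hy)
  · simp only [Set.mem_iUnion, SetLike.mem_coe, exists_prop, not_exists, not_and]
    exact fun Q _ => Q.neg_one_notMem
  · exact Set.mem_biUnion hQ hx

theorem hasMemOrNegMem_of_isMax {Q : RingPreordering A} (hQ : IsMax Q) : HasMemOrNegMem Q := by
  refine ⟨fun a => ?_⟩
  have mem_of_proper {b : A} (hb : ∀ x ∈ Q, ∀ y ∈ Q, x + b * y ≠ -1) : b ∈ Q :=
    hQ (fun x hx => mem_adjoin_of_mem (hT := Q.mul_self_mem) (h := hb) hx) self_mem_adjoin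
  by_contra! hneg
  obtain ⟨x, hx, y, hy, hxy⟩ : ∃ x ∈ Q, ∃ y ∈ Q, x + a * y = -1 := by
    by_contra! hb; exact hneg.1 (mem_of_proper hb)
  obtain ⟨x', hx', y', hy', hxy'⟩ : ∃ x ∈ Q, ∃ y ∈ Q, x + -a * y = -1 := by
    by_contra! hb; exact hneg.2 (mem_of_proper hb)
  -- in `(1 + x') (x + a y) - a y (x' - a y')` the odd powers of `a` cancel
  have key : x + x' + x * x' + a * a * (y * y') = -1 := by
    linear_combination (1 + x') * hxy - a * y * hxy'
  exact Q.neg_one_notMem (key ▸ add_mem (add_mem (add_mem hx hx') (mul_mem hx hx'))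
    (mul_mem (Q.mul_self_mem a) (mul_mem hy hy')))

end RingPreordering

variable [Algebra ℝ A]

variable (A) in
theorem algebraMap_inv_two_mul_two : algebraMap ℝ A 2⁻¹ * 2 = 1 := by
  rw [← map_ofNat (algebraMap ℝ A) 2, ← map_mul, inv_mul_cancel₀ two_ne_zero, map_one]

namespace Subsemiring

def IsArchimedean (T : Subsemiring A) : Prop :=
  ∀ a : A, ∃ r : ℝ, algebraMap ℝ A r - a ∈ T

theorem algebraMap_mem_of_nonneg {T : Subsemiring A} (hT : ∀ x : A, x * x ∈ T)
    {r : ℝ} (hr : 0 ≤ r) : algebraMap ℝ A r ∈ T := by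
  simpa only [← map_mul, Real.mul_self_sqrt hr] using hT (algebraMap ℝ A √r)

end Subsemiring

namespace RingPreordering

variable (P : RingPreordering A)

theorem algebraMap_mem_iff {r : ℝ} : algebraMap ℝ A r ∈ P ↔ 0 ≤ r := by
  refine ⟨fun hr => ?_, Subsemiring.algebraMap_mem_of_nonneg P.mul_self_mem⟩
  by_contra! hneg
  have hinv : algebraMap ℝ A (-r⁻¹) ∈ P :=
    Subsemiring.algebraMap_mem_of_nonneg P.mul_self_mem (by simpa using hneg.le)
  refine P.neg_one_notMem ?_
  simpa only [← map_mul, mul_neg, mul_inv_cancel₀ hneg.ne, map_neg, map_one] using mul_mem hr hinv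

theorem le_of_sub_mem {a : A} {r s : ℝ} (hr : a - algebraMap ℝ A r ∈ P)
    (hs : algebraMap ℝ A s - a ∈ P) : r ≤ s := by
  rw [← sub_nonneg, ← P.algebraMap_mem_iff, map_sub]
  simpa using add_mem hr hs

/-- For a total Archimedean preordering, the unique such `c` is the value of `a` at the induced
character `A →ₐ[ℝ] ℝ`. -/
def IsCut (a : A) (c : ℝ) : Prop :=
  (∀ r < c, a - algebraMap ℝ A r ∈ P) ∧ ∀ r > c, algebraMap ℝ A r - a ∈ P

variable {P}

theorem IsCut.unique {a : A} {c c' : ℝ} (h : P.IsCut a c) (h' : P.IsCut a c') : c = c' := by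
  wlog hlt : c < c' generalizing c c'
  · rcases (not_lt.1 hlt).lt_or_eq with hlt' | heq
    · exact (this h' h hlt').symm
    · exact heq.symm
  obtain ⟨r, hcr, hrc'⟩ := exists_between hlt
  obtain ⟨s, hcs, hsr⟩ := exists_between hcr
  exact absurd (P.le_of_sub_mem (h'.1 r hrc') (h.2 s hcs)) (not_le.2 hsr)

theorem exists_isCut [HasMemOrNegMem P] (harch : P.toSubsemiring.IsArchimedean)
    (a : A) : ∃ c, P.IsCut a c := by
  set L := {r : ℝ | a - algebraMap ℝ A r ∈ P}
  have hne : L.Nonempty := by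
    obtain ⟨r, hr⟩ := harch (-a)
    exact ⟨-r, by simpa [L, add_comm] using hr⟩
  have hbdd : BddAbove L := by
    obtain ⟨s, hs⟩ := harch a
    exact ⟨s, fun r hr => P.le_of_sub_mem hr hs⟩
  refine ⟨sSup L, fun r hr => ?_, fun r hr => ?_⟩
  · obtain ⟨l, hl, hrl⟩ := exists_lt_of_lt_csSup hne hr
    have hlr : algebraMap ℝ A (l - r) ∈ P := P.algebraMap_mem_iff.2 (sub_nonneg.2 hrl.le)
    simpa [map_sub] using add_mem hl hlr
  · refine (mem_or_neg_mem P (algebraMap ℝ A r - a)).resolve_right fun hneg => ?_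
    have hrL : r ∈ L := by rw [neg_sub] at hneg; exact hneg
    exact absurd (le_csSup hbdd hrL) (not_le.2 hr)

theorem isCut_algebraMap (c : ℝ) : P.IsCut (algebraMap ℝ A c) c :=
  ⟨fun r hr => by simpa [← map_sub, P.algebraMap_mem_iff] using hr.le,
    fun r hr => by simpa [← map_sub, P.algebraMap_mem_iff] using hr.le⟩

theorem IsCut.add {a b : A} {c d : ℝ} (ha : P.IsCut a c) (hb : P.IsCut b d) :
    P.IsCut (a + b) (c + d) := by
  refine ⟨fun r hr => ?_, fun r hr => ?_⟩
  · have h := add_mem (ha.1 (c - (c + d - r) / 2) (by linarith))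
      (hb.1 (r - (c - (c + d - r) / 2)) (by linarith))
    convert h using 1
    rw [map_sub (algebraMap ℝ A) r]; ring
  · have h := add_mem (ha.2 (c + (r - c - d) / 2) (by linarith))
      (hb.2 (r - (c + (r - c - d) / 2)) (by linarith))
    convert h using 1
    rw [map_sub (algebraMap ℝ A) r]; ring

theorem IsCut.neg {a : A} {c : ℝ} (h : P.IsCut a c) : P.IsCut (-a) (-c) := by
  refine ⟨fun r hr => ?_, fun r hr => ?_⟩
  · convert h.2 (-r) (by linarith) using 1
    rw [map_neg]; ring
  · convert h.1 (-r) (by linarith) using 1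
    rw [map_neg]; ring

theorem IsCut.nonneg_of_mem {a : A} {c : ℝ} (h : P.IsCut a c) (ha : a ∈ P) : 0 ≤ c :=
  le_of_forall_gt_imp_ge_of_dense fun r hr =>
    P.le_of_sub_mem (by simpa using ha) (h.2 r hr)

theorem IsCut.mem_of_pos {a : A} {c : ℝ} (h : P.IsCut a c) (hc : 0 < c) : a ∈ P := by
  simpa using h.1 0 hc

theorem IsCut.mul_of_pos {a b : A} {c d : ℝ} (ha : P.IsCut a c) (hb : P.IsCut b d)
    (hc : 0 < c) (hd : 0 < d) : P.IsCut (a * b) (c * d) := by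
  have haP := ha.mem_of_pos hc
  have hbP := hb.mem_of_pos hd
  refine ⟨fun r hr => ?_, fun r hr => ?_⟩
  · rcases le_or_gt r 0 with hr0 | hr0
    · simpa [sub_eq_add_neg, ← map_neg] using
        add_mem (mul_mem haP hbP) (P.algebraMap_mem_iff.2 (neg_nonneg.2 hr0))
    obtain ⟨r₁, hr₁, hr₁c⟩ := exists_between ((div_lt_iff₀ hd).2 hr)
    have hr₁0 : 0 < r₁ := (div_pos hr0 hd).trans hr₁
    have hr₂d : r / r₁ < d := (div_lt_iff₀ hr₁0).2 (by rwa [div_lt_iff₀ hd, mul_comm] at hr₁)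
    have h₁ := ha.1 r₁ hr₁c
    have h₂ := hb.1 (r / r₁) hr₂d
    have hsplit : algebraMap ℝ A r = algebraMap ℝ A r₁ * algebraMap ℝ A (r / r₁) := by
      rw [← map_mul, mul_div_cancel₀ _ hr₁0.ne']
    have hr₂ : algebraMap ℝ A (r / r₁) ∈ P := P.algebraMap_mem_iff.2 (div_pos hr0 hr₁0).le
    have hr₁' : algebraMap ℝ A r₁ ∈ P := P.algebraMap_mem_iff.2 hr₁0.le
    convert add_mem (add_mem (mul_mem h₁ h₂) (mul_mem hr₂ h₁)) (mul_mem hr₁' h₂) using 1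
    rw [hsplit]; ring
  · obtain ⟨r₁, hcr₁, hr₁⟩ := exists_between ((lt_div_iff₀ hd).2 hr)
    have hr₁0 : 0 < r₁ := hc.trans hcr₁
    have hdr₂ : d < r / r₁ := (lt_div_iff₀ hr₁0).2 (by rwa [lt_div_iff₀ hd, mul_comm] at hr₁)
    have h₁ := ha.2 r₁ hcr₁
    have h₂ := hb.2 (r / r₁) hdr₂
    have hsplit : algebraMap ℝ A r = algebraMap ℝ A r₁ * algebraMap ℝ A (r / r₁) := by
      rw [← map_mul, mul_div_cancel₀ _ hr₁0.ne']
    have hr₁' : algebraMap ℝ A r₁ ∈ P := P.algebraMap_mem_iff.2 hr₁0.le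
    convert add_mem (mul_mem h₁ hbP) (mul_mem hr₁' h₂) using 1
    rw [hsplit]; ring

theorem IsCut.mul {a b : A} {c d : ℝ} (ha : P.IsCut a c) (hb : P.IsCut b d) :
    P.IsCut (a * b) (c * d) := by
  -- shift `a` and `b` by a constant `k` making both cuts positive, then expand the product
  set k := |c| + |d| + 1
  have hk : 0 < k := by positivity
  have ha' := ha.add (isCut_algebraMap k)
  have hb' := hb.add (isCut_algebraMap k)
  have hc' : 0 < c + k := by linarith [neg_abs_le c, abs_nonneg d]
  have hd' : 0 < d + k := by linarith [neg_abs_le d, abs_nonneg c]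
  have h := (((ha'.mul_of_pos hb' hc' hd').add ((isCut_algebraMap k).mul_of_pos ha' hk hc').neg).add
    ((isCut_algebraMap k).mul_of_pos hb' hk hd').neg).add (isCut_algebraMap (k * k))
  convert h using 1
  · rw [map_mul]; ring
  · ring

theorem exists_algHom_nonneg [HasMemOrNegMem P] (harch : P.toSubsemiring.IsArchimedean) :
    ∃ φ : A →ₐ[ℝ] ℝ, ∀ a ∈ P, 0 ≤ φ a := by
  choose φ hφ using exists_isCut harch
  refine ⟨{ toFun := φ
            map_one' := (hφ 1).unique (by simpa using isCut_algebraMap (P := P) 1)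
            map_mul' := fun a b => (hφ (a * b)).unique ((hφ a).mul (hφ b))
            map_zero' := (hφ 0).unique (by simpa using isCut_algebraMap (P := P) 0)
            map_add' := fun a b => (hφ (a + b)).unique ((hφ a).add (hφ b))
            commutes' := fun r => (hφ _).unique (isCut_algebraMap r) },
    fun a ha => (hφ a).nonneg_of_mem ha⟩

end RingPreordering

namespace Subsemiring

variable {T : Subsemiring A} (hT : ∀ x : A, x * x ∈ T)
include hT

theorem sub_mem_of_le {a : A} {r s : ℝ} (hr : algebraMap ℝ A r - a ∈ T) (hrs : r ≤ s) :
    algebraMap ℝ A s - a ∈ T := by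
  convert add_mem (algebraMap_mem_of_nonneg hT (sub_nonneg.2 hrs)) hr using 1
  rw [map_sub]; ring

theorem IsArchimedean.eventually_sub_mem (harch : T.IsArchimedean) (a : A) :
    ∀ᶠ r in Filter.atTop, algebraMap ℝ A r - a ∈ T := by
  obtain ⟨r₀, hr₀⟩ := harch a
  filter_upwards [Filter.eventually_ge_atTop r₀] with r hr using sub_mem_of_le hT hr₀ hr

def boundedSubalgebra : Subalgebra ℝ A where
  carrier := {a | ∃ r : ℝ, algebraMap ℝ A r - a ∈ T ∧ algebraMap ℝ A r + a ∈ T}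
  add_mem' := by
    rintro a b ⟨r, hr, hr'⟩ ⟨s, hs, hs'⟩
    refine ⟨r + s, ?_, ?_⟩
    · convert add_mem hr hs using 1; rw [map_add]; ring
    · convert add_mem hr' hs' using 1; rw [map_add]; ring
  mul_mem' := by
    rintro a b ⟨r, hr, hr'⟩ ⟨s, hs, hs'⟩
    have half := algebraMap_inv_two_mul_two A
    have half_mem := algebraMap_mem_of_nonneg hT (inv_nonneg.2 zero_le_two)
    refine ⟨r * s, ?_, ?_⟩
    · convert mul_mem half_mem (add_mem (mul_mem hr' hs) (mul_mem hr hs')) using 1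
      rw [map_mul]; linear_combination (a * b - algebraMap ℝ A r * algebraMap ℝ A s) * half
    · convert mul_mem half_mem (add_mem (mul_mem hr' hs') (mul_mem hr hs)) using 1
      rw [map_mul]; linear_combination (-(a * b) - algebraMap ℝ A r * algebraMap ℝ A s) * half
  algebraMap_mem' c := ⟨|c|, by
    simpa only [← map_sub, ← map_add] using
      ⟨algebraMap_mem_of_nonneg hT (sub_nonneg.2 (le_abs_self c)),
        algebraMap_mem_of_nonneg hT (by linarith [neg_abs_le c])⟩⟩

theorem mem_boundedSubalgebra_of_sub_mul_self_mem {a : A} {c : ℝ}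
    (h : algebraMap ℝ A c - a * a ∈ T) : a ∈ boundedSubalgebra hT := by
  -- `c + 1/4 ∓ a = (a ∓ 1/2)² + (c - a²)`
  refine ⟨c + 2⁻¹ * 2⁻¹, ?_, ?_⟩
  · convert add_mem (hT (a - algebraMap ℝ A 2⁻¹)) h using 1
    rw [map_add, map_mul]; linear_combination a * algebraMap_inv_two_mul_two A
  · convert add_mem (hT (a + algebraMap ℝ A 2⁻¹)) h using 1
    rw [map_add, map_mul]; linear_combination (-a) * algebraMap_inv_two_mul_two A

theorem isArchimedean_of_adjoin_eq_top {s : Set A} (hs : Algebra.adjoin ℝ s = ⊤)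
    (hbdd : ∀ a ∈ s, ∃ c : ℝ, algebraMap ℝ A c - a * a ∈ T) : T.IsArchimedean := by
  have htop : boundedSubalgebra hT = ⊤ := top_unique <| hs ▸ Algebra.adjoin_le fun a ha =>
    (hbdd a ha).elim fun _ hc => mem_boundedSubalgebra_of_sub_mul_self_mem hT hc
  intro a
  obtain ⟨r, hr, -⟩ : a ∈ boundedSubalgebra hT := htop ▸ Algebra.mem_top
  exact ⟨r, hr⟩

theorem add_algebraMap_mem_of_mul_eq (harch : T.IsArchimedean) {F s t : A} (hs : s ∈ T)
    (ht : t ∈ T) (hFt : F * t = 1 + s) {d : ℝ} (hd : 0 < d) : F + algebraMap ℝ A d ∈ T := by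
  obtain ⟨k, hk, hkt, hkF, hkF'⟩ := ((Filter.eventually_ge_atTop 1).and
    ((harch.eventually_sub_mem hT t).and ((harch.eventually_sub_mem hT F).and
      (harch.eventually_sub_mem hT (-F))))).exists
  set θ := 1 - k⁻¹ ^ 2
  have hθ₀ : 0 ≤ θ := sub_nonneg.2 (pow_le_one₀ (by positivity) (inv_le_one_of_one_le₀ hk))
  have hθ₁ : θ < 1 := sub_lt_self 1 (by positivity)
  have hkl : algebraMap ℝ A k⁻¹ * algebraMap ℝ A k = 1 := by
    rw [← map_mul, inv_mul_cancel₀ (by linarith), map_one]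
  have mem_const {r : ℝ} (hr : 0 ≤ r) := algebraMap_mem_of_nonneg hT hr
  have step {c : ℝ} (hc : 0 ≤ c) (hF : F + algebraMap ℝ A c ∈ T) :
      F + algebraMap ℝ A (c * θ) ∈ T := by
    have hl : 0 ≤ k⁻¹ := by positivity
    -- with `l = k⁻¹`: `F + θ c = l (k - t) (F + c) + l s + l + c l² ((k - F) t + s)`
    convert add_mem (add_mem (add_mem (mul_mem (mul_mem (mem_const hl) hkt) hF)
      (mul_mem (mem_const hl) hs)) (mem_const hl))
      (mul_mem (mem_const (by positivity : 0 ≤ c * k⁻¹ ^ 2)) (add_mem (mul_mem hkF ht) hs))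
      using 1
    simp only [θ, map_mul, map_sub, map_one, map_pow]
    linear_combination (-(F + algebraMap ℝ A c + algebraMap ℝ A c * algebraMap ℝ A k⁻¹ * t)) * hkl
      + (algebraMap ℝ A k⁻¹ + algebraMap ℝ A c * algebraMap ℝ A k⁻¹ ^ 2) * hFt
  have iterate (p : ℕ) : F + algebraMap ℝ A (k * θ ^ p) ∈ T := by
    induction p with
    | zero => simpa [add_comm] using hkF'
    | succ p ih => simpa only [pow_succ, mul_assoc] using step (by positivity) ih
  obtain ⟨p, hp⟩ : ∃ p : ℕ, k * θ ^ p < d := by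
    obtain ⟨p, hp⟩ := exists_pow_lt_of_lt_one (div_pos hd (by linarith : (0 : ℝ) < k)) hθ₁
    exact ⟨p, by rwa [lt_div_iff₀' (by linarith : (0 : ℝ) < k)] at hp⟩
  convert add_mem (iterate p) (mem_const (sub_nonneg.2 hp.le)) using 1
  rw [map_sub]; ring

/-- Jacobi's representation theorem for Archimedean preprimes containing all squares. -/
theorem mem_of_forall_algHom_le (harch : T.IsArchimedean) {f : A} {e : ℝ} (he : 0 < e)
    (hf : ∀ φ : A →ₐ[ℝ] ℝ, (∀ a ∈ T, 0 ≤ φ a) → e ≤ φ f) : f ∈ T := by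
  set F := f - algebraMap ℝ A (e / 2)
  by_cases hF : ∀ x ∈ T, ∀ y ∈ T, x + -F * y ≠ -1
  · exfalso
    obtain ⟨Q, hle, hmax⟩ := (RingPreordering.adjoin T hT (-F) hF).exists_le_isMax
    have hTQ {a : A} (ha : a ∈ T) : a ∈ Q := hle (RingPreordering.mem_adjoin_of_mem ha)
    have := RingPreordering.hasMemOrNegMem_of_isMax hmax
    obtain ⟨φ, hφ⟩ := Q.exists_algHom_nonneg fun a => (harch a).imp fun _ => hTQ
    have hφF := hφ _ (hle RingPreordering.self_mem_adjoin)
    have hφf := hf φ fun a ha => hφ a (hTQ ha)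
    simp only [F, map_neg, map_sub, AlgHom.commutes, Algebra.algebraMap_self, RingHom.id_apply]
      at hφF
    linarith
  · push Not at hF
    obtain ⟨x, hx, y, hy, hxy⟩ := hF
    have hFy : F * y = 1 + x := by linear_combination -hxy
    simpa [F] using add_algebraMap_mem_of_mul_eq hT harch hx hy hFy (half_pos he)

end Subsemiring

section QuadraticModule

variable {R : Type*} [CommRing R]

/-- For a single generator the quadratic module is closed under products, since `g²` is a square. -/
def quadraticModule (g : R) : Subsemiring R where
  carrier := {p | ∃ σ₀ σ₁, IsSumSq σ₀ ∧ IsSumSq σ₁ ∧ p = σ₀ + σ₁ * g}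
  zero_mem' := ⟨0, 0, .zero, .zero, by ring⟩
  one_mem' := ⟨1, 0, .one, .zero, by ring⟩
  add_mem' := by
    rintro _ _ ⟨σ₀, σ₁, h₀, h₁, rfl⟩ ⟨τ₀, τ₁, h₀', h₁', rfl⟩
    exact ⟨σ₀ + τ₀, σ₁ + τ₁, h₀.add h₀', h₁.add h₁', by ring⟩
  mul_mem' := by
    rintro _ _ ⟨σ₀, σ₁, h₀, h₁, rfl⟩ ⟨τ₀, τ₁, h₀', h₁', rfl⟩
    exact ⟨σ₀ * τ₀ + σ₁ * τ₁ * (g * g), σ₀ * τ₁ + σ₁ * τ₀,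
      (h₀.mul h₀').add ((h₁.mul h₁').mul (.mul_self g)), (h₀.mul h₁').add (h₁.mul h₀'), by ring⟩

theorem mul_self_mem_quadraticModule (g x : R) : x * x ∈ quadraticModule g :=
  ⟨x * x, 0, .mul_self x, .zero, by ring⟩

theorem self_mem_quadraticModule (g : R) : g ∈ quadraticModule g :=
  ⟨0, 1, .zero, .one, by ring⟩

end QuadraticModule

theorem IsSumSq.isSOS {σ : Type*} {p : MvPolynomial σ ℝ} (h : IsSumSq p) : IsSOS p := by
  induction h with
  | zero => exact ⟨0, fun _ => 0, by simp⟩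
  | @sq_add a _ _ ih =>
    obtain ⟨k, q, rfl⟩ := ih
    exact ⟨k + 1, Fin.cons a q, by simp [Fin.sum_univ_succ, sq]⟩

theorem isArchimedean_quadraticModule_ball (ι : Type*) [Fintype ι] (N : ℝ) :
    (quadraticModule (C N - ∑ i, X i ^ 2 : MvPolynomial ι ℝ)).IsArchimedean := by
  classical
  refine Subsemiring.isArchimedean_of_adjoin_eq_top (mul_self_mem_quadraticModule _)
    (adjoin_range_X (R := ℝ)) ?_
  rintro _ ⟨i, rfl⟩
  refine ⟨N, ∑ j ∈ Finset.univ.erase i, X j ^ 2, 1, IsSumSq.sum_sq _ _, .one, ?_⟩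
  rw [algebraMap_eq, ← Finset.add_sum_erase _ _ (Finset.mem_univ i)]
  ring

theorem isCompact_setOf_sum_sq_le (ι : Type*) [Fintype ι] (N : ℝ) :
    IsCompact {x : ι → ℝ | ∑ i, x i ^ 2 ≤ N} :=
  (isCompact_univ_pi fun _ => isCompact_Icc (a := -√N) (b := √N)).of_isClosed_subset
    (isClosed_le (by fun_prop) continuous_const) fun x hx i _ =>
      abs_le.1 (Real.abs_le_sqrt
        ((Finset.single_le_sum (fun j _ => sq_nonneg (x j)) (Finset.mem_univ i)).trans hx))

theorem putinar_ball_general (n : ℕ) (N : ℝ) (f : MvPolynomial (Fin n) ℝ)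
    (hf : ∀ x : Fin n → ℝ, (∑ i, (x i) ^ 2) ≤ N → 0 < eval x f) :
    ∃ σ₀ σ₁ : MvPolynomial (Fin n) ℝ, IsSOS σ₀ ∧ IsSOS σ₁ ∧
      f = σ₀ + σ₁ * (C N - ∑ i, (X i : MvPolynomial (Fin n) ℝ) ^ 2) := by
  obtain ⟨e, he, hfe⟩ :=
    (isCompact_setOf_sum_sq_le (Fin n) N).exists_forall_le' (continuous_eval f).continuousOn hf
  obtain ⟨σ₀, σ₁, h₀, h₁, rfl⟩ : f ∈ quadraticModule (C N - ∑ i, X i ^ 2) := by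
    refine Subsemiring.mem_of_forall_algHom_le (mul_self_mem_quadraticModule _)
      (isArchimedean_quadraticModule_ball _ N) he fun φ hφ => ?_
    have eval_eq (p : MvPolynomial (Fin n) ℝ) : φ p = eval (φ ∘ X) p :=
      DFunLike.congr_fun (aeval_unique φ) p
    have hball := hφ _ (self_mem_quadraticModule _)
    simp only [eval_eq, map_sub, map_sum, map_pow, eval_X, eval_C, sub_nonneg] at hball
    exact eval_eq f ▸ hfe _ hball
  exact ⟨σ₀, σ₁, h₀.isSOS, h₁.isSOS, rfl⟩

/-- **Putinar's theorem for the ball**: every polynomial strictly positive on the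
closed ball `{x : x_1² + ⋯ + x_n² ≤ N}` lies in the quadratic module generated by
`N - x_1² - ⋯ - x_n²`. -/
theorem putinar_ball (n : ℕ) (N : ℝ) (hN : 0 < N) (f : MvPolynomial (Fin n) ℝ)
    (hf : ∀ x : Fin n → ℝ, (∑ i, (x i) ^ 2) ≤ N → 0 < eval x f) :
    ∃ σ₀ σ₁ : MvPolynomial (Fin n) ℝ, IsSOS σ₀ ∧ IsSOS σ₁ ∧
      f = σ₀ + σ₁ * (C N - ∑ i, (X i : MvPolynomial (Fin n) ℝ) ^ 2) :=
  putinar_ball_general n N f hf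
end

section
/- Let U ⊆ ℝ^2 be symmetric with respect to the x-axis, described by a finite set S of polynomials of the form g_i(x, y^2), and suppose every polynomial nonnegative on U lies in the quadratic module M_S ⊂ ℝ[x,y]. Let S' = {g_i(x,y)} ∪ {y} and U^+ = K_{S'}. Then every polynomial nonnegative on U^+ lies in the preordering T_{S'}, and in fact in the set {σ_0 + Σ_i σ_i g_i(x,y) + τ_0 y + Σ_i τ_i y g_i(x,y) : σ_i, τ_i sums of squares}. -/
open MvPolynomial

/-- Substitution `y ↦ y²` in a polynomial of `ℝ[x,y]` (with `x = X 0`, `y = X 1`). -/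
noncomputable def subY2 (p : MvPolynomial (Fin 2) ℝ) : MvPolynomial (Fin 2) ℝ :=
  MvPolynomial.aeval ![X 0, (X 1) ^ 2] p

theorem subY2_add (p q : MvPolynomial (Fin 2) ℝ) : subY2 (p + q) = subY2 p + subY2 q :=
  map_add _ p q

theorem subY2_mul (p q : MvPolynomial (Fin 2) ℝ) : subY2 (p * q) = subY2 p * subY2 q :=
  map_mul _ p q

theorem subY2_sum {ι : Type*} (t : Finset ι) (p : ι → MvPolynomial (Fin 2) ℝ) :
    subY2 (∑ i ∈ t, p i) = ∑ i ∈ t, subY2 (p i) :=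
  map_sum _ p t

theorem subY2_X_zero : subY2 (X 0) = X 0 := by simp [subY2]

theorem subY2_X_one : subY2 (X 1) = X 1 ^ 2 := by simp [subY2]

theorem subY2_injective : Function.Injective subY2 := by
  have h := MvPolynomial.algebraicIndependent_polynomial_aeval_X
    (![Polynomial.X, Polynomial.X ^ 2] : Fin 2 → Polynomial ℝ) fun i => by
      fin_cases i
      · exact Polynomial.transcendental_X ℝ
      · exact (Polynomial.transcendental_X ℝ).pow two_pos
  have hfun : (fun i => Polynomial.aeval (X i : MvPolynomial (Fin 2) ℝ)
      ((![Polynomial.X, Polynomial.X ^ 2] : Fin 2 → Polynomial ℝ) i)) = ![X 0, X 1 ^ 2] := by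
    ext1 i; fin_cases i <;> simp
  rwa [hfun] at h

theorem eval_subY2 (x : Fin 2 → ℝ) (p : MvPolynomial (Fin 2) ℝ) :
    eval x (subY2 p) = eval ![x 0, x 1 ^ 2] p := by
  have hpt : (fun i => eval x (![X 0, X 1 ^ 2] i)) = ![x 0, x 1 ^ 2] := by
    ext i; fin_cases i <;> simp
  rw [subY2, aeval_eq_bind₁, eval, eval₂Hom_bind₁, ← hpt]
  rfl

noncomputable def reflectY : MvPolynomial (Fin 2) ℝ →ₐ[ℝ] MvPolynomial (Fin 2) ℝ :=
  aeval ![X 0, -X 1]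

theorem reflectY_X_one : reflectY (X 1) = -X 1 := by simp [reflectY]

theorem reflectY_subY2 (p : MvPolynomial (Fin 2) ℝ) : reflectY (subY2 p) = subY2 p := by
  rw [subY2, reflectY, comp_aeval_apply]
  congr 1
  ext i; fin_cases i <;> simp

theorem eq_of_subY2_eq_add_X_one_mul {f e o : MvPolynomial (Fin 2) ℝ}
    (h : subY2 f = subY2 e + X 1 * subY2 o) : f = e := by
  have hrefl : subY2 f = subY2 e - X 1 * subY2 o := by
    simpa only [map_add, map_mul, reflectY_subY2, reflectY_X_one, neg_mul, ← sub_eq_add_neg]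
      using congrArg reflectY h
  have hodd : (2 : MvPolynomial (Fin 2) ℝ) * (X 1 * subY2 o) = 0 := by
    linear_combination hrefl - h
  apply subY2_injective
  rw [h, (mul_eq_zero.mp hodd).resolve_left two_ne_zero, add_zero]

theorem exists_eq_subY2_add_X_one_mul_subY2 (p : MvPolynomial (Fin 2) ℝ) :
    ∃ a b, p = subY2 a + X 1 * subY2 b := by
  induction p using MvPolynomial.induction_on with
  | C c => exact ⟨C c, 0, by simp [subY2]⟩
  | add p q hp hq =>
    obtain ⟨a, b, rfl⟩ := hp
    obtain ⟨a', b', rfl⟩ := hq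
    exact ⟨a + a', b + b', by rw [subY2_add, subY2_add]; ring⟩
  | mul_X p i hp =>
    obtain ⟨a, b, rfl⟩ := hp
    match i with
    | 0 => exact ⟨a * X 0, b * X 0, by rw [subY2_mul, subY2_mul, subY2_X_zero]; ring⟩
    | 1 => exact ⟨b * X 1, a, by rw [subY2_mul, subY2_X_one]; ring⟩

theorem sq_subY2_add_X_one_mul_subY2 (a b : MvPolynomial (Fin 2) ℝ) :
    (subY2 a + X 1 * subY2 b) ^ 2 = subY2 (a ^ 2 + X 1 * b ^ 2) + X 1 * subY2 (2 * a * b) := by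
  have h2 : subY2 2 = 2 := map_ofNat _ 2
  simp only [sq, subY2_add, subY2_mul, subY2_X_one, h2]
  ring

theorem IsSOS.exists_eq_subY2_add_X_one_mul_subY2 {p : MvPolynomial (Fin 2) ℝ} (hp : IsSOS p) :
    ∃ A B O, IsSOS A ∧ IsSOS B ∧ p = subY2 (A + X 1 * B) + X 1 * subY2 O := by
  obtain ⟨k, q, rfl⟩ := hp
  choose a b hab using fun j => _root_.exists_eq_subY2_add_X_one_mul_subY2 (q j)
  refine ⟨∑ j, a j ^ 2, ∑ j, b j ^ 2, ∑ j, 2 * a j * b j, ⟨k, a, rfl⟩, ⟨k, b, rfl⟩, ?_⟩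
  calc ∑ j, q j ^ 2
      = ∑ j, (subY2 (a j ^ 2 + X 1 * b j ^ 2) + X 1 * subY2 (2 * a j * b j)) :=
        Finset.sum_congr rfl fun j _ => by rw [hab j, sq_subY2_add_X_one_mul_subY2]
    _ = _ := by
        simp only [subY2_add, subY2_mul, subY2_sum, Finset.sum_add_distrib, Finset.mul_sum]

theorem exists_sos_combination_of_subY2_eq {ι : Type*} [Fintype ι]
    {g q : ι → MvPolynomial (Fin 2) ℝ} {f p : MvPolynomial (Fin 2) ℝ}
    (hp : IsSOS p) (hq : ∀ i, IsSOS (q i)) (hf : subY2 f = p + ∑ i, q i * subY2 (g i)) :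
    ∃ (σ₀ τ₀ : MvPolynomial (Fin 2) ℝ) (σ τ : ι → MvPolynomial (Fin 2) ℝ),
      IsSOS σ₀ ∧ IsSOS τ₀ ∧ (∀ i, IsSOS (σ i)) ∧ (∀ i, IsSOS (τ i)) ∧
      f = σ₀ + (∑ i, σ i * g i) + τ₀ * X 1 + ∑ i, τ i * X 1 * g i := by
  obtain ⟨A₀, B₀, O₀, hA₀, hB₀, hp⟩ := hp.exists_eq_subY2_add_X_one_mul_subY2
  choose A B O hA hB hq using fun i => (hq i).exists_eq_subY2_add_X_one_mul_subY2
  refine ⟨A₀, B₀, A, B, hA₀, hB₀, hA, hB,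
    eq_of_subY2_eq_add_X_one_mul (o := O₀ + ∑ i, O i * g i) ?_⟩
  have hsum : ∑ i, q i * subY2 (g i) = subY2 (∑ i, A i * g i) + subY2 (∑ i, B i * X 1 * g i)
      + X 1 * subY2 (∑ i, O i * g i) := by
    simp only [subY2_sum, subY2_mul, subY2_X_one, Finset.mul_sum, ← Finset.sum_add_distrib]
    exact Finset.sum_congr rfl fun i _ => by rw [hq, subY2_add, subY2_mul, subY2_X_one]; ring
  rw [hf, hp, hsum]
  simp only [subY2_add, subY2_mul, subY2_X_one]
  ring

/-- **Elimination of squares (Nguyen–Powers).** Let `U = K_{g_i(x,y²)}` (a set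
symmetric w.r.t. the `x`-axis) and suppose every polynomial nonnegative on `U` lies
in the quadratic module generated by the `g_i(x,y²)`. Then every polynomial
nonnegative on `U⁺ = K_{{g_i(x,y)} ∪ {y}}` is of the form
`σ₀ + Σ σ_i g_i(x,y) + τ₀ y + Σ τ_i y g_i(x,y)` with sums of squares `σ_i, τ_i`
(in particular it lies in the preordering generated by `{g_i(x,y)} ∪ {y}`). -/
theorem elimination_of_squares (s : ℕ) (g : Fin s → MvPolynomial (Fin 2) ℝ)
    (H : ∀ f : MvPolynomial (Fin 2) ℝ,
      (∀ x : Fin 2 → ℝ, (∀ i, 0 ≤ eval x (subY2 (g i))) → 0 ≤ eval x f) →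
      ∃ (σ₀ : MvPolynomial (Fin 2) ℝ) (τ : Fin s → MvPolynomial (Fin 2) ℝ),
        IsSOS σ₀ ∧ (∀ i, IsSOS (τ i)) ∧ f = σ₀ + ∑ i, τ i * subY2 (g i)) :
    ∀ f : MvPolynomial (Fin 2) ℝ,
      (∀ x : Fin 2 → ℝ, (∀ i, 0 ≤ eval x (g i)) → 0 ≤ x 1 → 0 ≤ eval x f) →
      ∃ (σ₀ τ₀ : MvPolynomial (Fin 2) ℝ) (σ τ : Fin s → MvPolynomial (Fin 2) ℝ),
        IsSOS σ₀ ∧ IsSOS τ₀ ∧ (∀ i, IsSOS (σ i)) ∧ (∀ i, IsSOS (τ i)) ∧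
        f = σ₀ + (∑ i, σ i * g i) + τ₀ * X 1 + ∑ i, τ i * X 1 * g i := by
  intro f hf
  obtain ⟨σ₀, τ, hσ₀, hτ, hrep⟩ := H (subY2 f) fun x hx => by
    simp only [eval_subY2] at hx ⊢
    exact hf _ hx (sq_nonneg (x 1))
  exact exists_sos_combination_of_subY2_eq hσ₀ hτ hrep
end
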